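/- arXiv:1812.05243 — 9 statements merged into one kernel-verified Lean document; each statement's English description precedes it below -/
import Mathlib

section
/- Assume f : ℝ^p → ℝ is differentiable, μ_f-strongly convex (μ_f > 0) and L_f-smooth, and g : ℝ^p → ℝ ∪ {+∞} is proper, closed, convex. Let 0 < m ≤ L < +∞ satisfy ω := (1/m)·√((L − 2μ_f)m + L_f²) < 1, fix τ_{k+1} ∈ (0,1], ξ⁰ ∈ ∂g(x⁰) for some x⁰ ∈ dom f ∩ dom g, a symmetric matrix H_k with m·I ⪯ H_k ⪯ L·I, and a point xᵏ. If x^{k+1} := prox^{H_k}_{(1/τ_{k+1})g}( xᵏ − H_k^{-1}( ∇f(xᵏ) − (1/τ_{k+1} − 1)ξ⁰ ) ), then ‖x^{k+1} − x*_{τ_{k+1}}‖₂ ≤ ω‖xᵏ − x*_{τ_{k+1}}‖₂. -/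
open Set
open scoped RealInnerProductSpace

noncomputable section

/-- `ℝ^p` with the Euclidean inner product. -/
abbrev Euc (p : ℕ) := EuclideanSpace ℝ (Fin p)

/-- The weighted (local) norm `‖u‖_H := √⟪H u, u⟫` induced by an operator `H`. -/
noncomputable def wnorm {p : ℕ} (H : Euc p →L[ℝ] Euc p) (u : Euc p) : ℝ :=
  Real.sqrt ⟪H u, u⟫

/-- `v` is a subgradient at `y` of the proper convex function equal to `g` on its
effective domain `S` (and `+∞` outside). -/
def IsSubgradient {p : ℕ} (g : Euc p → ℝ) (S : Set (Euc p)) (v y : Euc p) : Prop :=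
  y ∈ S ∧ ∀ z ∈ S, g y + ⟪v, z - y⟫ ≤ g z

/-- Closedness of the extended-real-valued function equal to `g` on `S` and `+∞`
outside, expressed as closedness of its epigraph. -/
def ClosedOn {p : ℕ} (g : Euc p → ℝ) (S : Set (Euc p)) : Prop :=
  IsClosed {q : Euc p × ℝ | q.1 ∈ S ∧ g q.1 ≤ q.2}

/-!
`x^{k+1}` is the `H`-proximal point of `d := xᵏ - H⁻¹(∇f(xᵏ) - (1/τ - 1)ξ⁰)`, so
`τ H(d - x^{k+1}) ∈ ∂g(x^{k+1})`, while the optimality condition says the same of `x*` with `d`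
replaced by `d* := x* - H⁻¹(∇f(x*) - (1/τ - 1)ξ⁰)`. Monotonicity of `∂g` makes the proximal map
firmly nonexpansive in the `H`-metric, whence `‖x^{k+1} - x*‖_H ≤ ‖d - d*‖_H`. With `e := xᵏ - x*`
we have `d - d* = e - H⁻¹(∇f(xᵏ) - ∇f(x*))`; expanding `‖d - d*‖²_H` and using strong convexity
and smoothness of `f` bounds it by `(L - 2μ_f + L_f²/m)‖e‖²`, and `m‖·‖² ≤ ‖·‖²_H` concludes.
-/

open Filter Topology

theorem ConvexOn.add_apply_sub_le_of_hasFDerivAt {F : Type*} [NormedAddCommGroup F]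
    [NormedSpace ℝ F] {f : F → ℝ} {f' : F →L[ℝ] ℝ} {x : F}
    (hf : ConvexOn ℝ univ f) (hx : HasFDerivAt f f' x) (y : F) :
    f x + f' (y - x) ≤ f y := by
  set φ : ℝ →ᵃ[ℝ] F := AffineMap.lineMap x y
  have hline : ConvexOn ℝ univ (f ∘ φ) := hf.comp_affineMap φ
  have hderiv : HasDerivAt (f ∘ φ) (f' (y - x)) 0 :=
    hx.comp_hasDerivAt_of_eq (0 : ℝ) AffineMap.hasDerivAt_lineMap (by simp [φ])
  have := hline.le_slope_of_hasDerivAt (mem_univ 0) (mem_univ 1) zero_lt_one hderiv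
  simp only [slope, φ, Function.comp_apply, AffineMap.lineMap_apply_zero,
    AffineMap.lineMap_apply_one, sub_zero, inv_one, one_smul, vsub_eq_sub] at this
  linarith

theorem nonneg_of_forall_mem_Ioc_nonneg_add_mul {A C : ℝ}
    (h : ∀ t ∈ Ioc (0 : ℝ) 1, 0 ≤ A + t * C) : 0 ≤ A := by
  have hlim : Tendsto (fun t : ℝ => A + t * C) (𝓝[>] 0) (𝓝 A) := by
    have : Continuous fun t : ℝ => A + t * C := by fun_prop
    simpa using this.continuousWithinAt.tendsto (x := 0) (s := Ioi 0)
  exact ge_of_tendsto hlim <| eventually_of_mem (Ioc_mem_nhdsGT zero_lt_one) h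

theorem le_one_div_mul_sqrt_mul_of_sq_mul_sq_le {m a b X : ℝ} (hm : 0 < m) (hb : 0 ≤ b)
    (h : m ^ 2 * a ^ 2 ≤ X * b ^ 2) : a ≤ 1 / m * √X * b := by
  have hma : m * a ≤ √X * b :=
    calc m * a ≤ √((m * a) ^ 2) := by rw [Real.sqrt_sq_eq_abs]; exact le_abs_self _
      _ ≤ √(X * b ^ 2) := Real.sqrt_le_sqrt (by linarith [mul_pow m a 2])
      _ = √X * b := by rw [Real.sqrt_mul' X (sq_nonneg b), Real.sqrt_sq hb]
  calc a = 1 / m * (m * a) := by field_simp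
    _ ≤ 1 / m * (√X * b) := by gcongr
    _ = 1 / m * √X * b := by ring

section InnerProductSpace

variable {E : Type*} [NormedAddCommGroup E] [InnerProductSpace ℝ E]

theorem StrongConvexOn.add_inner_add_le_of_hasGradientAt [CompleteSpace E] {f : E → ℝ}
    {f' x : E} {μ : ℝ} (hf : StrongConvexOn univ μ f) (hx : HasGradientAt f f' x) (y : E) :
    f x + ⟪f', y - x⟫ + μ / 2 * ‖y - x‖ ^ 2 ≤ f y := by
  have hconv := (strongConvexOn_iff_convex.1 hf).add_apply_sub_le_of_hasFDerivAt
    (hx.hasFDerivAt.sub ((hasStrictFDerivAt_norm_sq x).hasFDerivAt.const_mul (μ / 2))) y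
  simp only [sub_apply, smul_apply,
    InnerProductSpace.toDual_apply_apply, innerSL_apply_apply, smul_eq_mul, nsmul_eq_mul,
    Nat.cast_ofNat, inner_sub_right, real_inner_self_eq_norm_sq] at hconv
  rw [norm_sub_sq_real, inner_sub_right, real_inner_comm x y]
  linarith

theorem StrongConvexOn.mul_norm_sub_sq_le_inner_sub [CompleteSpace E] {f : E → ℝ}
    {f' : E → E} {μ : ℝ} (hf : StrongConvexOn univ μ f) (hf' : ∀ z, HasGradientAt f (f' z) z)
    (x y : E) : μ * ‖x - y‖ ^ 2 ≤ ⟪f' x - f' y, x - y⟫ := by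
  have hxy := hf.add_inner_add_le_of_hasGradientAt (hf' x) y
  have hyx := hf.add_inner_add_le_of_hasGradientAt (hf' y) x
  rw [← neg_sub x y, inner_neg_right, norm_neg] at hxy
  rw [inner_sub_left]
  linarith

variable {H : E →L[ℝ] E}

theorem inner_map_add_smul_self (hH : H.IsSymmetric)
    (v u : E) (t : ℝ) :
    ⟪H (v + t • u), v + t • u⟫ = ⟪H v, v⟫ + 2 * t * ⟪H v, u⟫ + t ^ 2 * ⟪H u, u⟫ := by
  simp only [map_add, map_smul, inner_add_left, inner_add_right, real_inner_smul_left,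
    real_inner_smul_right, hH.apply_clm u v, real_inner_comm (H v) u]
  ring

theorem ContinuousLinearMap.IsPositive.inner_map_self_le_of_le_inner (hH : H.IsPositive)
    {a e : E} (h : ⟪H e, e⟫ ≤ ⟪H a, e⟫) : ⟪H e, e⟫ ≤ ⟪H a, a⟫ := by
  have := hH.inner_nonneg_left (a - e)
  simp only [map_sub, inner_sub_left, inner_sub_right, hH.inner_left_eq_inner_right e a,
    real_inner_comm (H a) e] at this
  linarith

theorem mul_inner_map_self_le_norm_map_sq {m : ℝ} (hm : 0 ≤ m)
    (hH : ∀ u, m * ‖u‖ ^ 2 ≤ ⟪H u, u⟫) (w : E) : m * ⟪H w, w⟫ ≤ ‖H w‖ ^ 2 := by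
  have hcs : ⟪H w, w⟫ ≤ ‖H w‖ * ‖w‖ := real_inner_le_norm _ _
  have hmw : m * ‖w‖ ≤ ‖H w‖ := by
    nlinarith [hH w, norm_nonneg w, norm_nonneg (H w)]
  nlinarith [norm_nonneg w, norm_nonneg (H w)]

theorem mul_inner_map_sub_self_le (hH : H.IsSymmetric) {m L : ℝ} (hm : 0 ≤ m)
    (hbounds : ∀ u, m * ‖u‖ ^ 2 ≤ ⟪H u, u⟫ ∧ ⟪H u, u⟫ ≤ L * ‖u‖ ^ 2) (e w : E) :
    m * ⟪H (e - w), e - w⟫ ≤ m * L * ‖e‖ ^ 2 - 2 * m * ⟪H w, e⟫ + ‖H w‖ ^ 2 := by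
  have hexp : ⟪H (e - w), e - w⟫ = ⟪H e, e⟫ - 2 * ⟪H w, e⟫ + ⟪H w, w⟫ := by
    simp only [map_sub, inner_sub_left, inner_sub_right, hH.apply_clm e w,
      real_inner_comm (H w) e]
    ring
  have hL := mul_le_mul_of_nonneg_left (hbounds e).2 hm
  have hw := mul_inner_map_self_le_norm_map_sq hm (fun u => (hbounds u).1) w
  rw [hexp]
  nlinarith

end InnerProductSpace

section Subgradient

variable {p : ℕ} {g : Euc p → ℝ} {S : Set (Euc p)}

theorem IsSubgradient.inner_sub_nonneg {a b x y : Euc p} (ha : IsSubgradient g S a x)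
    (hb : IsSubgradient g S b y) : 0 ≤ ⟪a - b, x - y⟫ := by
  have hxy := ha.2 y hb.1
  have hyx := hb.2 x ha.1
  rw [← neg_sub x y, inner_neg_right] at hxy
  rw [inner_sub_left]
  linarith

theorem isSubgradient_of_isMinOn_prox {H : Euc p →L[ℝ] Euc p} (hH : H.IsSymmetric)
    (hg : ConvexOn ℝ S g) {c : ℝ} (hc : 0 < c) {d x : Euc p} (hxS : x ∈ S)
    (hx : IsMinOn (fun u => c * g u + 1 / 2 * ⟪H (u - d), u - d⟫) S x) :
    IsSubgradient g S (c⁻¹ • H (d - x)) x := by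
  refine ⟨hxS, fun z hz => ?_⟩
  suffices 0 ≤ c * (g z - g x) + ⟪H (x - d), z - x⟫ by
    rw [← neg_sub d x, map_neg, inner_neg_left] at this
    rw [real_inner_smul_left]
    have : c⁻¹ * ⟪H (d - x), z - x⟫ ≤ g z - g x := by
      rw [inv_mul_le_iff₀ hc]; linarith
    linarith
  -- compare the objective at `x` with its value at `x + t • (z - x)` and let `t → 0⁺`
  refine nonneg_of_forall_mem_Ioc_nonneg_add_mul (C := 1 / 2 * ⟪H (z - x), z - x⟫)
    fun t ⟨ht0, ht1⟩ => ?_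
  have hseg : (1 - t) • x + t • z = x + t • (z - x) := by module
  have hgt : g (x + t • (z - x)) ≤ (1 - t) * g x + t * g z := by
    simpa [hseg] using hg.2 hxS hz (sub_nonneg.2 ht1) ht0.le (sub_add_cancel 1 t)
  have hmin := isMinOn_iff.1 hx _
    (hseg ▸ hg.1 hxS hz (sub_nonneg.2 ht1) ht0.le (sub_add_cancel 1 t))
  rw [show x + t • (z - x) - d = (x - d) + t • (z - x) by abel,
    inner_map_add_smul_self hH] at hmin
  have : 0 ≤ t * (c * (g z - g x) + ⟪H (x - d), z - x⟫ + t * (1 / 2 * ⟪H (z - x), z - x⟫)) := by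
    nlinarith [mul_le_mul_of_nonneg_left hgt hc.le]
  exact (mul_nonneg_iff_of_pos_left ht0).1 this

end Subgradient

theorem stmt_3_general {p : ℕ}
    (f g : Euc p → ℝ) (Dg : Set (Euc p))
    (f' : Euc p → Euc p)
    (μf Lf m L ω τ1 : ℝ)
    (ξ0 xk xk1 xsol : Euc p)
    (H Hinv : Euc p →L[ℝ] Euc p)
    -- `f` is differentiable, `μf`-strongly convex and `Lf`-smooth
    (hf_grad : ∀ z, HasGradientAt f (f' z) z)
    (hf_strong : StrongConvexOn univ μf f)
    (hf_smooth : ∀ z w : Euc p, ‖f' z - f' w‖ ≤ Lf * ‖z - w‖)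
    -- `g` is convex
    (hg_convex : ConvexOn ℝ Dg g)
    -- parameters and contraction factor
    (hm : 0 < m)
    (hω : ω = (1 / m) * Real.sqrt ((L - 2 * μf) * m + Lf ^ 2))
    (hτ1 : τ1 ∈ Ioc (0 : ℝ) 1)
    -- the metric: symmetric, `m·I ⪯ H ⪯ L·I`, with inverse `Hinv`
    (hH_symm : ∀ u v : Euc p, ⟪H u, v⟫ = ⟪u, H v⟫)
    (hH_bounds : ∀ u : Euc p, m * ‖u‖ ^ 2 ≤ ⟪H u, u⟫ ∧ ⟪H u, u⟫ ≤ L * ‖u‖ ^ 2)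
    (hHinv : ∀ u : Euc p, H (Hinv u) = u ∧ Hinv (H u) = u)
    -- `x^{k+1} = prox^{H}_{(1/τ1)g}(x^k - H⁻¹(∇f(x^k) - (1/τ1 - 1)ξ⁰))`
    (hxk1 : xk1 ∈ Dg ∧
      ∀ u ∈ Dg,
        (1 / τ1) * g xk1 + (1 / 2) *
            ⟪H (xk1 - (xk - Hinv (f' xk - (1 / τ1 - 1) • ξ0))),
              xk1 - (xk - Hinv (f' xk - (1 / τ1 - 1) • ξ0))⟫
          ≤ (1 / τ1) * g u + (1 / 2) *
            ⟪H (u - (xk - Hinv (f' xk - (1 / τ1 - 1) • ξ0))),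
              u - (xk - Hinv (f' xk - (1 / τ1 - 1) • ξ0))⟫)
    -- `xsol` solves the parametric optimality condition at `τ1`
    (hxsol : IsSubgradient g Dg ((1 - τ1) • ξ0 - τ1 • f' xsol) xsol) :
    ‖xk1 - xsol‖ ≤ ω * ‖xk - xsol‖ := by
  obtain ⟨hτ, -⟩ := hτ1
  have hH_pos : H.IsPositive :=
    (H.isPositive_iff).2 ⟨hH_symm, fun u => le_trans (by positivity) (hH_bounds u).1⟩
  set e := xk - xsol
  set e1 := xk1 - xsol
  set Δ := f' xk - f' xsol
  set w := Hinv Δ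
  have hHw : H w = Δ := (hHinv Δ).1
  have hprox := isSubgradient_of_isMinOn_prox hH_symm hg_convex (one_div_pos.2 hτ) hxk1.1
    (isMinOn_iff.2 hxk1.2)
  have hdiff : (1 / τ1)⁻¹ • H (xk - Hinv (f' xk - (1 / τ1 - 1) • ξ0) - xk1)
      - ((1 - τ1) • ξ0 - τ1 • f' xsol) = τ1 • (H (e - w) - H e1) := by
    have hc : τ1 * (1 / τ1 - 1) = 1 - τ1 := by field_simp
    simp only [inv_div, div_one, map_sub, (hHinv _).1, hHw, e, e1, Δ, smul_sub, smul_smul]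
    rw [hc]
    module
  have hfirm : ⟪H e1, e1⟫ ≤ ⟪H (e - w), e1⟫ := by
    have := hprox.inner_sub_nonneg hxsol
    rw [hdiff, real_inner_smul_left, inner_sub_left] at this
    nlinarith
  have hstep := mul_inner_map_sub_self_le hH_symm hm.le hH_bounds e w
  have hmono : μf * ‖e‖ ^ 2 ≤ ⟪Δ, e⟫ := hf_strong.mul_norm_sub_sq_le_inner_sub hf_grad xk xsol
  have hlip : ‖Δ‖ ^ 2 ≤ Lf ^ 2 * ‖e‖ ^ 2 := by
    rw [← mul_pow]; exact pow_le_pow_left₀ (norm_nonneg _) (hf_smooth xk xsol) 2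
  have hcontr : m ^ 2 * ‖e1‖ ^ 2 ≤ ((L - 2 * μf) * m + Lf ^ 2) * ‖e‖ ^ 2 := by
    have h1 := mul_le_mul_of_nonneg_left (hH_bounds e1).1 hm.le
    have h2 := mul_le_mul_of_nonneg_left (hH_pos.inner_map_self_le_of_le_inner hfirm) hm.le
    have h3 := mul_le_mul_of_nonneg_left hmono hm.le
    rw [hHw] at hstep
    nlinarith
  rw [hω]
  exact le_one_div_mul_sqrt_mul_of_sq_mul_sq_le hm (norm_nonneg _) hcontr

/-- Lemma: one-step contraction of the scaled proximal step towards
the parametric solution `x*_{τ_{k+1}}`. -/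
theorem stmt_3 {p : ℕ}
    (f g : Euc p → ℝ) (Dg : Set (Euc p))
    (f' : Euc p → Euc p)
    (μf Lf m L ω τ1 : ℝ)
    (x0 ξ0 xk xk1 xsol : Euc p)
    (H Hinv : Euc p →L[ℝ] Euc p)
    -- `f` is differentiable, `μf`-strongly convex and `Lf`-smooth
    (hf_grad : ∀ z, HasGradientAt f (f' z) z)
    (hμf : 0 < μf)
    (hf_strong : StrongConvexOn univ μf f)
    (hf_smooth : ∀ z w : Euc p, ‖f' z - f' w‖ ≤ Lf * ‖z - w‖)
    -- `g` is proper, closed, convex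
    (hg_proper : Dg.Nonempty)
    (hg_convex : ConvexOn ℝ Dg g)
    (hg_closed : ClosedOn g Dg)
    -- parameters and contraction factor
    (hm : 0 < m) (hmL : m ≤ L)
    (hω : ω = (1 / m) * Real.sqrt ((L - 2 * μf) * m + Lf ^ 2))
    (hω1 : ω < 1)
    (hτ1 : τ1 ∈ Ioc (0 : ℝ) 1)
    (hx0 : x0 ∈ Dg)
    (hξ0 : IsSubgradient g Dg ξ0 x0)
    -- the metric: symmetric, `m·I ⪯ H ⪯ L·I`, with inverse `Hinv`
    (hH_symm : ∀ u v : Euc p, ⟪H u, v⟫ = ⟪u, H v⟫)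
    (hH_bounds : ∀ u : Euc p, m * ‖u‖ ^ 2 ≤ ⟪H u, u⟫ ∧ ⟪H u, u⟫ ≤ L * ‖u‖ ^ 2)
    (hHinv : ∀ u : Euc p, H (Hinv u) = u ∧ Hinv (H u) = u)
    -- `x^{k+1} = prox^{H}_{(1/τ1)g}(x^k - H⁻¹(∇f(x^k) - (1/τ1 - 1)ξ⁰))`
    (hxk1 : xk1 ∈ Dg ∧
      ∀ u ∈ Dg,
        (1 / τ1) * g xk1 + (1 / 2) *
            ⟪H (xk1 - (xk - Hinv (f' xk - (1 / τ1 - 1) • ξ0))),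
              xk1 - (xk - Hinv (f' xk - (1 / τ1 - 1) • ξ0))⟫
          ≤ (1 / τ1) * g u + (1 / 2) *
            ⟪H (u - (xk - Hinv (f' xk - (1 / τ1 - 1) • ξ0))),
              u - (xk - Hinv (f' xk - (1 / τ1 - 1) • ξ0))⟫)
    -- `xsol` solves the parametric optimality condition at `τ1`
    (hxsol : IsSubgradient g Dg ((1 - τ1) • ξ0 - τ1 • f' xsol) xsol) :
    ‖xk1 - xsol‖ ≤ ω * ‖xk - xsol‖ :=
  stmt_3_general f g Dg f' μf Lf m L ω τ1 ξ0 xk xk1 xsol H Hinv hf_grad hf_strong hf_smooth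
    hg_convex hm hω hτ1 hH_symm hH_bounds hHinv hxk1 hxsol

end
end

section
/- Let M > 0 and q ∈ (0,1) be given constants, and let (τ_k) ⊂ (0,1) be a sequence satisfying τ_{k+1} ≤ τ_k + M·qᵏ·τ_k·τ_{k+1} for all k ≥ 0. Then, for every k ≥ 0 such that 1 − q − τ₀M(1 − qᵏ) > 0, one has τ_k ≤ τ₀(1 − q)/(1 − q − τ₀M(1 − qᵏ)) and 1 − τ_k ≥ ((1 − τ₀)(1 − q) − τ₀M + τ₀Mqᵏ)/(1 − q − τ₀M(1 − qᵏ)). -/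
/-!
Passing to reciprocals linearises the recursion: `τ_{k+1} ≤ τ_k + M qᵏ τ_k τ_{k+1}` says exactly
`1/τ_{k+1} ≥ 1/τ_k - M qᵏ`. Summing the geometric series gives
`1/τ_k ≥ 1/τ₀ - M (1 - qᵏ)/(1 - q)`, and inverting this bound gives both estimates.
-/

open Set

lemma inv_sub_le_inv_of_le_add_mul {a b c : ℝ} (ha : 0 < a) (hb : 0 < b)
    (h : b ≤ a + c * a * b) : a⁻¹ - c ≤ b⁻¹ := by
  rw [sub_le_iff_le_add, inv_le_iff_one_le_mul₀' ha]
  calc (1 : ℝ) = b * b⁻¹ := (mul_inv_cancel₀ hb.ne').symm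
    _ ≤ (a + c * a * b) * b⁻¹ := by gcongr
    _ = a * (b⁻¹ + c) := by field_simp

lemma sub_sum_range_le_of_sub_le {u d : ℕ → ℝ} (h : ∀ k, u k - d k ≤ u (k + 1)) (k : ℕ) :
    u 0 - ∑ i ∈ Finset.range k, d i ≤ u k := by
  induction k with
  | zero => simp
  | succ k ih => rw [Finset.sum_range_succ]; linarith [h k]

lemma le_div_of_inv_sub_le_inv {a b c : ℝ} (ha : 0 < a) (hb : 0 < b) (hc : 0 < 1 - a * c)
    (h : a⁻¹ - c ≤ b⁻¹) : b ≤ a / (1 - a * c) := by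
  have hac : a⁻¹ - c = (1 - a * c) / a := by field_simp
  rw [hac] at h
  rwa [← inv_le_inv₀ (div_pos ha hc) hb, inv_div]

theorem stmt_4_general (M q : ℝ) (τ : ℕ → ℝ)
    (hq : q ∈ Ioo (0 : ℝ) 1)
    (hτ : ∀ k : ℕ, τ k ∈ Ioo (0 : ℝ) 1)
    (hrec : ∀ k : ℕ, τ (k + 1) ≤ τ k + M * q ^ k * τ k * τ (k + 1)) :
    ∀ k : ℕ, 0 < 1 - q - τ 0 * M * (1 - q ^ k) →
      τ k ≤ τ 0 * (1 - q) / (1 - q - τ 0 * M * (1 - q ^ k)) ∧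
      ((1 - τ 0) * (1 - q) - τ 0 * M + τ 0 * M * q ^ k) /
          (1 - q - τ 0 * M * (1 - q ^ k)) ≤ 1 - τ k := by
  intro k hD
  have hq1 : 0 < 1 - q := sub_pos.2 hq.2
  have hsum : ∑ i ∈ Finset.range k, M * q ^ i = M * (1 - q ^ k) / (1 - q) := by
    rw [← Finset.mul_sum, geom_sum_eq hq.2.ne, ← neg_div_neg_eq, neg_sub, neg_sub, mul_div_assoc]
  have hinv : (τ 0)⁻¹ - M * (1 - q ^ k) / (1 - q) ≤ (τ k)⁻¹ := hsum ▸
    sub_sum_range_le_of_sub_le (u := fun i ↦ (τ i)⁻¹)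
      (fun i ↦ inv_sub_le_inv_of_le_add_mul (hτ i).1 (hτ (i + 1)).1 (hrec i)) k
  have hrewrite : τ 0 * (1 - q) / (1 - q - τ 0 * M * (1 - q ^ k)) =
      τ 0 / (1 - τ 0 * (M * (1 - q ^ k) / (1 - q))) := by
    field_simp
  have hupper : τ k ≤ τ 0 * (1 - q) / (1 - q - τ 0 * M * (1 - q ^ k)) := by
    rw [hrewrite]
    refine le_div_of_inv_sub_le_inv (hτ 0).1 (hτ k).1 ?_ hinv
    rw [mul_div_assoc', one_sub_div hq1.ne', ← mul_assoc]
    exact div_pos hD hq1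
  refine ⟨hupper, ?_⟩
  have hlower : ((1 - τ 0) * (1 - q) - τ 0 * M + τ 0 * M * q ^ k) /
      (1 - q - τ 0 * M * (1 - q ^ k)) = 1 - τ 0 * (1 - q) / (1 - q - τ 0 * M * (1 - q ^ k)) := by
    rw [one_sub_div hD.ne']
    ring_nf
  linarith

/-- Lemma: explicit bounds for a sequence `τ_k ⊂ (0,1)` satisfying
`τ_{k+1} ≤ τ_k + M qᵏ τ_k τ_{k+1}`. -/
theorem stmt_4 (M q : ℝ) (τ : ℕ → ℝ)
    (hM : 0 < M) (hq : q ∈ Ioo (0 : ℝ) 1)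
    (hτ : ∀ k : ℕ, τ k ∈ Ioo (0 : ℝ) 1)
    (hrec : ∀ k : ℕ, τ (k + 1) ≤ τ k + M * q ^ k * τ k * τ (k + 1)) :
    ∀ k : ℕ, 0 < 1 - q - τ 0 * M * (1 - q ^ k) →
      τ k ≤ τ 0 * (1 - q) / (1 - q - τ 0 * M * (1 - q ^ k)) ∧
      ((1 - τ 0) * (1 - q) - τ 0 * M + τ 0 * M * q ^ k) /
          (1 - q - τ 0 * M * (1 - q ^ k)) ≤ 1 - τ k :=
  stmt_4_general M q τ hq hτ hrec
end

section
/- Let f : ℝ^p → ℝ ∪ {+∞} be standard self-concordant with positive definite Hessians on its open convex domain, g : ℝ^p → ℝ ∪ {+∞} proper, closed, convex, τ₀ ∈ (0,1) fixed, x⁰ ∈ dom f ∩ dom g, and ξ⁰ ∈ ∂g(x⁰). For t ∈ (0,1], let x*_t be a solution of the auxiliary optimality condition 0 ∈ ∇f(x*_t) − (1/τ₀ − 1)ξ⁰ − t(∇f(x⁰) + ξ⁰) + (1/τ₀)∂g(x*_t). Then for t, t̂ ∈ (0,1]: ‖x*_t − x⁰‖_{x⁰} / (1 + ‖x*_t −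 x⁰‖_{x⁰}) ≤ |t − 1|·‖∇f(x⁰) + ξ⁰‖*_{x⁰}, and ‖x*_t − x*_t̂‖_{x*_t} / (1 + ‖x*_t − x*_t̂‖_{x*_t}) ≤ |t − t̂|·‖∇f(x⁰) + ξ⁰‖*_{x*_t}. -/
open Set
open scoped RealInnerProductSpace

noncomputable section

/-!
Both bounds compare two solutions `x`, `y` of the auxiliary condition, at parameters `s`, `s'`;
`x⁰` is the solution at `s = 1` because `ξ⁰ ∈ ∂g(x⁰)`. Monotonicity of `∂g` gives
`⟪∇f(y) - ∇f(x), y - x⟫ ≤ (s - s') ⟪∇f(x⁰) + ξ⁰, x - y⟫`, and Cauchy–Schwarz in the local norm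
at `x` bounds the right-hand side by `|s - s'| ‖∇f(x⁰) + ξ⁰‖*_x r` with `r = ‖y - x‖_x`.
Self-concordance bounds the left-hand side below by `r² / (1 + r)`: along the segment,
`ψ(s) = ‖y - x‖²_{x + s(y - x)}` satisfies `|(ψ^{-1/2})'| ≤ 1`, so `ψ(s) ≥ r² / (1 + s r)²`,
whose integral over `[0, 1]` is `r² / (1 + r)`.
-/

theorem div_one_add_le_of_sq_le_mul_one_add {r c d e l : ℝ} (hr : 0 ≤ r) (hc : 0 ≤ c)
    (hsq : r ^ 2 ≤ d * (1 + r)) (hd : d ≤ l * e) (he : |e| ≤ c * r) :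
    r / (1 + r) ≤ |l| * c := by
  have hdcr : d ≤ |l| * c * r :=
    calc d ≤ l * e := hd
      _ ≤ |l| * |e| := by rw [← abs_mul]; exact le_abs_self _
      _ ≤ |l| * (c * r) := by gcongr
      _ = |l| * c * r := by ring
  rw [div_le_iff₀ (by linarith)]
  rcases hr.eq_or_lt with rfl | hr
  · simpa using mul_nonneg (abs_nonneg l) hc
  · nlinarith

theorem inv_sqrt_le_inv_sqrt_add_of_abs_deriv_le {ψ ψ' : ℝ → ℝ}
    (hpos : ∀ s ∈ Icc (0 : ℝ) 1, 0 < ψ s) (hψ : ∀ s ∈ Icc (0 : ℝ) 1, HasDerivAt ψ (ψ' s) s)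
    (hbound : ∀ s ∈ Icc (0 : ℝ) 1, |ψ' s| ≤ 2 * ψ s ^ ((3 : ℝ) / 2))
    {s : ℝ} (hs : s ∈ Icc (0 : ℝ) 1) : (√(ψ s))⁻¹ ≤ (√(ψ 0))⁻¹ + s := by
  have hη : ∀ s ∈ Icc (0 : ℝ) 1, HasDerivWithinAt (fun s => ψ s ^ (-(1 / 2) : ℝ))
      (ψ' s * (-(1 / 2)) * ψ s ^ (-(1 / 2) - 1 : ℝ)) (Icc 0 1) s := fun s hs =>
    ((hψ s hs).rpow_const (Or.inl (hpos s hs).ne')).hasDerivWithinAt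
  have hη' : ∀ s ∈ Ico (0 : ℝ) 1, ‖ψ' s * (-(1 / 2)) * ψ s ^ (-(1 / 2) - 1 : ℝ)‖ ≤ 1 := by
    intro s hs
    have hs' := Ico_subset_Icc_self hs
    have hp := hpos s hs'
    have hcancel : ψ s ^ ((3 : ℝ) / 2) * ψ s ^ (-(1 / 2) - 1 : ℝ) = 1 := by
      rw [← Real.rpow_add hp]; norm_num
    rw [Real.norm_eq_abs, abs_mul, abs_mul, abs_of_pos (Real.rpow_pos_of_pos hp _)]
    calc |ψ' s| * |-(1 / 2 : ℝ)| * ψ s ^ (-(1 / 2) - 1 : ℝ)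
        ≤ 2 * ψ s ^ ((3 : ℝ) / 2) * |-(1 / 2 : ℝ)| * ψ s ^ (-(1 / 2) - 1 : ℝ) := by
          gcongr; exact hbound s hs'
      _ = 1 := by rw [mul_right_comm, mul_assoc _ _ (ψ s ^ _), hcancel]; norm_num
  have hmvt := norm_image_sub_le_of_norm_deriv_le_segment' hη hη' s hs
  rw [Real.norm_eq_abs, sub_zero, one_mul] at hmvt
  have hsqrt : ∀ s ∈ Icc (0 : ℝ) 1, ψ s ^ (-(1 / 2) : ℝ) = (√(ψ s))⁻¹ := fun s hs => by
    rw [Real.rpow_neg (hpos s hs).le, Real.sqrt_eq_rpow]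
  rw [← hsqrt s hs, ← hsqrt 0 (left_mem_Icc.2 zero_le_one)]
  linarith [le_abs_self (ψ s ^ (-(1 / 2) : ℝ) - ψ 0 ^ (-(1 / 2) : ℝ))]

theorem sq_sqrt_div_le_of_abs_deriv_le {ψ ψ' : ℝ → ℝ}
    (hpos : ∀ s ∈ Icc (0 : ℝ) 1, 0 < ψ s) (hψ : ∀ s ∈ Icc (0 : ℝ) 1, HasDerivAt ψ (ψ' s) s)
    (hbound : ∀ s ∈ Icc (0 : ℝ) 1, |ψ' s| ≤ 2 * ψ s ^ ((3 : ℝ) / 2))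
    {s : ℝ} (hs : s ∈ Icc (0 : ℝ) 1) : √(ψ 0) ^ 2 / (1 + s * √(ψ 0)) ^ 2 ≤ ψ s := by
  have hinv := inv_sqrt_le_inv_sqrt_add_of_abs_deriv_le hpos hψ hbound hs
  set r := √(ψ 0)
  have hr : 0 < r := Real.sqrt_pos.2 (hpos 0 (left_mem_Icc.2 zero_le_one))
  have hq : 0 < √(ψ s) := Real.sqrt_pos.2 (hpos s hs)
  have hle : r ≤ √(ψ s) * (1 + s * r) :=
    calc r = (√(ψ s) * r) * (√(ψ s))⁻¹ := by field_simp
      _ ≤ (√(ψ s) * r) * (r⁻¹ + s) := by gcongr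
      _ = √(ψ s) * (1 + s * r) := by field_simp
  calc r ^ 2 / (1 + s * r) ^ 2 = (r / (1 + s * r)) ^ 2 := (div_pow _ _ _).symm
    _ ≤ √(ψ s) ^ 2 := by
        have hden : 0 < 1 + s * r := by nlinarith [hs.1]
        gcongr
        rwa [div_le_iff₀ hden]
    _ = ψ s := Real.sq_sqrt (hpos s hs).le

theorem sq_div_one_add_le_sub_of_le_deriv {φ ψ : ℝ → ℝ} {r : ℝ} (hr : 0 ≤ r)
    (hφ : ∀ s ∈ Icc (0 : ℝ) 1, HasDerivAt φ (ψ s) s)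
    (hψ : ∀ s ∈ Icc (0 : ℝ) 1, r ^ 2 / (1 + s * r) ^ 2 ≤ ψ s) :
    r ^ 2 / (1 + r) ≤ φ 1 - φ 0 := by
  set ℓ : ℝ → ℝ := fun s => r ^ 2 * s / (1 + s * r)
  have hℓ : ∀ s ∈ Icc (0 : ℝ) 1, HasDerivAt ℓ (r ^ 2 / (1 + s * r) ^ 2) s := by
    intro s hs
    have hden : 1 + s * r ≠ 0 := by nlinarith [hs.1]
    have hnum : HasDerivAt (fun s => r ^ 2 * s) (r ^ 2) s := by
      simpa using (hasDerivAt_id s).const_mul (r ^ 2)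
    have hden' : HasDerivAt (fun s => 1 + s * r) r s := by
      simpa using ((hasDerivAt_id s).mul_const r).const_add 1
    refine (hnum.div hden' hden).congr_deriv ?_
    ring
  have hmono : MonotoneOn (fun s => φ s - ℓ s) (Icc 0 1) := by
    refine monotoneOn_of_hasDerivWithinAt_nonneg (f' := fun s => ψ s - r ^ 2 / (1 + s * r) ^ 2)
      (convex_Icc 0 1)
      (fun s hs => ((hφ s hs).sub (hℓ s hs)).continuousAt.continuousWithinAt)
      (fun s hs => ?_) (fun s hs => ?_)
    · rw [interior_Icc] at hs
      exact ((hφ s (Ioo_subset_Icc_self hs)).sub (hℓ s (Ioo_subset_Icc_self hs))).hasDerivWithinAt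
    · rw [interior_Icc] at hs
      exact sub_nonneg.2 (hψ s (Ioo_subset_Icc_self hs))
  have := hmono (left_mem_Icc.2 zero_le_one) (right_mem_Icc.2 zero_le_one) zero_le_one
  simp only [ℓ, mul_zero, zero_mul, add_zero, zero_div, sub_zero, mul_one, one_mul] at this
  linarith

theorem sq_sqrt_le_sub_mul_of_abs_deriv_le {φ ψ ψ' : ℝ → ℝ}
    (hφ : ∀ s ∈ Icc (0 : ℝ) 1, HasDerivAt φ (ψ s) s)
    (hpos : ∀ s ∈ Icc (0 : ℝ) 1, 0 < ψ s) (hψ : ∀ s ∈ Icc (0 : ℝ) 1, HasDerivAt ψ (ψ' s) s)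
    (hbound : ∀ s ∈ Icc (0 : ℝ) 1, |ψ' s| ≤ 2 * ψ s ^ ((3 : ℝ) / 2)) :
    √(ψ 0) ^ 2 ≤ (φ 1 - φ 0) * (1 + √(ψ 0)) := by
  have := sq_div_one_add_le_sub_of_le_deriv (Real.sqrt_nonneg _) hφ
    fun s hs => sq_sqrt_div_le_of_abs_deriv_le hpos hψ hbound hs
  rwa [div_le_iff₀ (by positivity)] at this

section InnerProductSpace

variable {E : Type*} [NormedAddCommGroup E] [InnerProductSpace ℝ E]

theorem inner_apply_comm_of_hasGradientAt [CompleteSpace E] {f : E → ℝ} {f' : E → E}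
    {H : E →L[ℝ] E} {x : E} (hf : ∀ᶠ y in nhds x, HasGradientAt f (f' y) y)
    (hH : HasFDerivAt f' H x) (u v : E) : ⟪H u, v⟫ = ⟪H v, u⟫ := by
  have hdual : ∀ w : E, innerSL ℝ w = InnerProductSpace.toDual ℝ E w := fun w =>
    ContinuousLinearMap.ext fun y => by rw [InnerProductSpace.toDual_apply_apply]; rfl
  refine second_derivative_symmetric_of_eventually (f := f) (f' := fun y => innerSL ℝ (f' y))
    ?_ ((innerSL ℝ).hasFDerivAt.comp x hH) u v
  filter_upwards [hf] with y hy
  rw [hdual]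
  exact hy.hasFDerivAt

theorem abs_inner_le_sqrt_mul_sqrt {B Binv : E →L[ℝ] E}
    (hsym : ∀ u v : E, ⟪B u, v⟫ = ⟪B v, u⟫) (hpsd : ∀ u : E, 0 ≤ ⟪B u, u⟫)
    (hinv : ∀ u : E, B (Binv u) = u) (v u : E) :
    |⟪v, u⟫| ≤ √⟪Binv v, v⟫ * √⟪B u, u⟫ := by
  have hcs := LinearMap.BilinForm.apply_mul_apply_le_of_forall_zero_le
    ((innerₗ E).comp (B : E →ₗ[ℝ] E)) hpsd (Binv v) u
  simp only [LinearMap.comp_apply, innerₗ_apply_apply, ContinuousLinearMap.coe_coe, hinv] at hcs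
  rw [hsym u, hinv, real_inner_comm (Binv v)] at hcs
  rw [← Real.sqrt_mul' _ (hpsd u)]
  exact Real.abs_le_sqrt (by rw [sq]; exact hcs)

theorem sq_sqrt_le_inner_sub_mul_of_selfConcordant {D : Set E} {f' : E → E}
    {f'' : E → E →L[ℝ] E} {f''' : E → E →L[ℝ] E →L[ℝ] E} (hD : Convex ℝ D)
    (hf' : ∀ z ∈ D, HasFDerivAt f' (f'' z) z) (hf'' : ∀ z ∈ D, HasFDerivAt f'' (f''' z) z)
    (hpos : ∀ z ∈ D, ∀ u : E, u ≠ 0 → 0 < ⟪f'' z u, u⟫)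
    (hsc : ∀ z ∈ D, ∀ u : E, |⟪f''' z u u, u⟫| ≤ 2 * ⟪f'' z u, u⟫ ^ ((3 : ℝ) / 2))
    {x y : E} (hx : x ∈ D) (hy : y ∈ D) :
    √⟪f'' x (y - x), y - x⟫ ^ 2 ≤ ⟪f' y - f' x, y - x⟫ * (1 + √⟪f'' x (y - x), y - x⟫) := by
  rcases eq_or_ne y x with rfl | hyx
  · simp
  set h := y - x
  set γ : ℝ → E := fun s => x + s • h
  have hγ : ∀ s ∈ Icc (0 : ℝ) 1, γ s ∈ D := fun s hs => hD.add_smul_sub_mem hx hy hs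
  have hγ' : ∀ s : ℝ, HasDerivAt γ h s := fun s =>
    (((hasDerivAt_id s).smul_const h).const_add x).congr_deriv (one_smul ℝ h)
  have hφ : ∀ s ∈ Icc (0 : ℝ) 1, HasDerivAt (fun s => ⟪f' (γ s), h⟫) ⟪f'' (γ s) h, h⟫ s :=
    fun s hs => by
      simpa using ((hf' _ (hγ s hs)).comp_hasDerivAt s (hγ' s)).inner ℝ (hasDerivAt_const s h)
  have hψ : ∀ s ∈ Icc (0 : ℝ) 1,
      HasDerivAt (fun s => ⟪f'' (γ s) h, h⟫) ⟪f''' (γ s) h h, h⟫ s := fun s hs => by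
    have hHess := (hf'' _ (hγ s hs)).comp_hasDerivAt s (hγ' s)
    simpa using (hHess.clm_apply (hasDerivAt_const s h)).inner ℝ (hasDerivAt_const s h)
  have key := sq_sqrt_le_sub_mul_of_abs_deriv_le hφ
    (fun s hs => hpos _ (hγ s hs) h (sub_ne_zero.2 hyx)) hψ (fun s hs => hsc _ (hγ s hs) h)
  have hγ0 : γ 0 = x := by simp [γ]
  have hγ1 : γ 1 = y := by simp [γ, h]
  simpa only [hγ0, hγ1, inner_sub_left] using key

end InnerProductSpace

theorem IsSubgradient.inner_sub_sub_nonneg {p : ℕ} {g : Euc p → ℝ} {S : Set (Euc p)}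
    {a b x y : Euc p} (hx : IsSubgradient g S a x) (hy : IsSubgradient g S b y) :
    0 ≤ ⟪a - b, x - y⟫ := by
  have h₁ := hx.2 y hy.1
  have h₂ := hy.2 x hx.1
  rw [← neg_sub x y, inner_neg_right] at h₁
  rw [inner_sub_left]
  linarith

theorem inner_sub_le_of_isSubgradient_smul {p : ℕ} {g : Euc p → ℝ} {S : Set (Euc p)}
    {c s s' : ℝ} {w v a b x y : Euc p} (hc : 0 < c)
    (hx : IsSubgradient g S (c • (w + s • v - a)) x)
    (hy : IsSubgradient g S (c • (w + s' • v - b)) y) :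
    ⟪a - b, x - y⟫ ≤ (s - s') * ⟪v, x - y⟫ := by
  have h := hx.inner_sub_sub_nonneg hy
  rw [show c • (w + s • v - a) - c • (w + s' • v - b) = c • ((s - s') • v - (a - b)) by module,
    real_inner_smul_left, inner_sub_left, real_inner_smul_left] at h
  linarith [nonneg_of_mul_nonneg_right h hc]

theorem wnorm_sub_comm {p : ℕ} (H : Euc p →L[ℝ] Euc p) (u v : Euc p) :
    wnorm H (u - v) = wnorm H (v - u) := by
  rw [wnorm, wnorm, ← neg_sub v u, map_neg, inner_neg_neg]

theorem stmt_7_general {p : ℕ}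
    (f g : Euc p → ℝ) (Df Dg : Set (Euc p))
    (f' : Euc p → Euc p)
    (f'' Hinv : Euc p → Euc p →L[ℝ] Euc p)
    (f''' : Euc p → Euc p →L[ℝ] Euc p →L[ℝ] Euc p)
    (τ0 t t' : ℝ)
    (x0 ξ0 xt xt' : Euc p)
    -- `dom f` is open convex; `f` is three times differentiable there
    (hDf_open : IsOpen Df) (hDf_conv : Convex ℝ Df)
    (hf_grad : ∀ z ∈ Df, HasGradientAt f (f' z) z)
    (hf_hess : ∀ z ∈ Df, HasFDerivAt f' (f'' z) z)
    (hf_third : ∀ z ∈ Df, HasFDerivAt f'' (f''' z) z)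
    -- positive definite Hessians, with inverses `Hinv`
    (hf_posdef : ∀ z ∈ Df, ∀ u : Euc p, u ≠ 0 → 0 < ⟪f'' z u, u⟫)
    (hHinv : ∀ z ∈ Df, ∀ u : Euc p, f'' z (Hinv z u) = u ∧ Hinv z (f'' z u) = u)
    -- `f` is standard self-concordant
    (hf_sc : ∀ z ∈ Df, ∀ u : Euc p,
      |⟪f''' z u u, u⟫| ≤ 2 * ⟪f'' z u, u⟫ ^ ((3 : ℝ) / 2))
    -- fixed homotopy parameter, initial point, and subgradient
    (hτ0 : τ0 ∈ Ioo (0 : ℝ) 1)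
    (hx0 : x0 ∈ Df ∩ Dg)
    (hξ0 : IsSubgradient g Dg ξ0 x0)
    -- `xt` and `xt'` solve the auxiliary optimality condition
    -- `0 ∈ ∇f(x) - (1/τ0 - 1)ξ⁰ - t(∇f(x⁰) + ξ⁰) + (1/τ0)∂g(x)` at `t` and `t'`
    (hxt_mem : xt ∈ Df ∩ Dg) (hxt'_mem : xt' ∈ Df ∩ Dg)
    (hxt : IsSubgradient g Dg
      (τ0 • ((1 / τ0 - 1) • ξ0 + t • (f' x0 + ξ0) - f' xt)) xt)
    (hxt' : IsSubgradient g Dg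
      (τ0 • ((1 / τ0 - 1) • ξ0 + t' • (f' x0 + ξ0) - f' xt')) xt') :
    wnorm (f'' x0) (xt - x0) / (1 + wnorm (f'' x0) (xt - x0))
        ≤ |t - 1| * wnorm (Hinv x0) (f' x0 + ξ0) ∧
    wnorm (f'' xt) (xt - xt') / (1 + wnorm (f'' xt) (xt - xt'))
        ≤ |t - t'| * wnorm (Hinv xt) (f' x0 + ξ0) := by
  have hsol₁ : IsSubgradient g Dg
      (τ0 • ((1 / τ0 - 1) • ξ0 + (1 : ℝ) • (f' x0 + ξ0) - f' x0)) x0 := by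
    convert hξ0 using 1
    rw [show (1 / τ0 - 1) • ξ0 + (1 : ℝ) • (f' x0 + ξ0) - f' x0 = τ0⁻¹ • ξ0 by module,
      smul_inv_smul₀ hτ0.1.ne']
  have hpsd : ∀ z ∈ Df, ∀ u : Euc p, 0 ≤ ⟪f'' z u, u⟫ := fun z hz u => by
    rcases eq_or_ne u 0 with rfl | hu
    · simp
    · exact (hf_posdef z hz u hu).le
  have hcs : ∀ z ∈ Df, ∀ v u : Euc p, |⟪v, u⟫| ≤ wnorm (Hinv z) v * wnorm (f'' z) u :=
    fun z hz => abs_inner_le_sqrt_mul_sqrt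
      (inner_apply_comm_of_hasGradientAt
        (Filter.eventually_of_mem (hDf_open.mem_nhds hz) hf_grad) (hf_hess z hz))
      (hpsd z hz) (fun u => (hHinv z hz u).1)
  have hsc : ∀ x ∈ Df, ∀ y ∈ Df,
      wnorm (f'' x) (y - x) ^ 2 ≤ ⟪f' y - f' x, y - x⟫ * (1 + wnorm (f'' x) (y - x)) :=
    fun x hx y hy => sq_sqrt_le_inner_sub_mul_of_selfConcordant hDf_conv hf_hess hf_third
      hf_posdef hf_sc hx hy
  constructor
  · exact div_one_add_le_of_sq_le_mul_one_add (Real.sqrt_nonneg _) (Real.sqrt_nonneg _)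
      (hsc x0 hx0.1 xt hxt_mem.1) (inner_sub_le_of_isSubgradient_smul hτ0.1 hxt hsol₁)
      (hcs x0 hx0.1 _ _)
  · rw [wnorm_sub_comm, abs_sub_comm]
    exact div_one_add_le_of_sq_le_mul_one_add (Real.sqrt_nonneg _) (Real.sqrt_nonneg _)
      (hsc xt hxt_mem.1 xt' hxt'_mem.1) (inner_sub_le_of_isSubgradient_smul hτ0.1 hxt' hxt)
      (hcs xt hxt_mem.1 _ _)

/-- Lemma: local-norm bounds for the solutions of the auxiliary
optimality condition used to find an initial point. -/
theorem stmt_7 {p : ℕ}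
    (f g : Euc p → ℝ) (Df Dg : Set (Euc p))
    (f' : Euc p → Euc p)
    (f'' Hinv : Euc p → Euc p →L[ℝ] Euc p)
    (f''' : Euc p → Euc p →L[ℝ] Euc p →L[ℝ] Euc p)
    (τ0 t t' : ℝ)
    (x0 ξ0 xt xt' : Euc p)
    -- `dom f` is open convex; `f` is three times differentiable there
    (hDf_open : IsOpen Df) (hDf_conv : Convex ℝ Df)
    (hf_convex : ConvexOn ℝ Df f)
    (hf_grad : ∀ z ∈ Df, HasGradientAt f (f' z) z)
    (hf_hess : ∀ z ∈ Df, HasFDerivAt f' (f'' z) z)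
    (hf_third : ∀ z ∈ Df, HasFDerivAt f'' (f''' z) z)
    -- positive definite Hessians, with inverses `Hinv`
    (hf_posdef : ∀ z ∈ Df, ∀ u : Euc p, u ≠ 0 → 0 < ⟪f'' z u, u⟫)
    (hHinv : ∀ z ∈ Df, ∀ u : Euc p, f'' z (Hinv z u) = u ∧ Hinv z (f'' z u) = u)
    -- `f` is standard self-concordant
    (hf_sc : ∀ z ∈ Df, ∀ u : Euc p,
      |⟪f''' z u u, u⟫| ≤ 2 * ⟪f'' z u, u⟫ ^ ((3 : ℝ) / 2))
    -- `g` is proper, closed, convex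
    (hg_proper : Dg.Nonempty)
    (hg_convex : ConvexOn ℝ Dg g)
    (hg_closed : ClosedOn g Dg)
    -- fixed homotopy parameter, initial point, and subgradient
    (hτ0 : τ0 ∈ Ioo (0 : ℝ) 1)
    (hx0 : x0 ∈ Df ∩ Dg)
    (hξ0 : IsSubgradient g Dg ξ0 x0)
    -- `xt` and `xt'` solve the auxiliary optimality condition
    -- `0 ∈ ∇f(x) - (1/τ0 - 1)ξ⁰ - t(∇f(x⁰) + ξ⁰) + (1/τ0)∂g(x)` at `t` and `t'`
    (ht : t ∈ Ioc (0 : ℝ) 1) (ht' : t' ∈ Ioc (0 : ℝ) 1)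
    (hxt_mem : xt ∈ Df ∩ Dg) (hxt'_mem : xt' ∈ Df ∩ Dg)
    (hxt : IsSubgradient g Dg
      (τ0 • ((1 / τ0 - 1) • ξ0 + t • (f' x0 + ξ0) - f' xt)) xt)
    (hxt' : IsSubgradient g Dg
      (τ0 • ((1 / τ0 - 1) • ξ0 + t' • (f' x0 + ξ0) - f' xt')) xt') :
    wnorm (f'' x0) (xt - x0) / (1 + wnorm (f'' x0) (xt - x0))
        ≤ |t - 1| * wnorm (Hinv x0) (f' x0 + ξ0) ∧
    wnorm (f'' xt) (xt - xt') / (1 + wnorm (f'' xt) (xt - xt'))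
        ≤ |t - t'| * wnorm (Hinv xt) (f' x0 + ξ0) :=
  stmt_7_general f g Df Dg f' f'' Hinv f''' τ0 t t' x0 ξ0 xt xt' hDf_open hDf_conv hf_grad hf_hess
    hf_third hf_posdef hHinv hf_sc hτ0 hx0 hξ0 hxt_mem hxt'_mem hxt hxt'

end
end

section
/- Let f : ℝ^p → ℝ be differentiable and convex, and g : ℝ^p → ℝ ∪ {+∞} be proper, closed, and μ_g-strongly convex with μ_g > 0. Let x⁰ ∈ dom f ∩ dom g, ξ⁰ ∈ ∂g(x⁰), and for τ ∈ (0,1] let x*_τ be a solution of the parametric optimality condition 0 ∈ τ∇f(x*_τ) − (1 − τ)ξ⁰ + ∂g(x*_τ). Then ‖x⁰ − x*_τ‖₂ ≤ (τ/μ_g)·‖∇f(x⁰) + ξ⁰‖₂. -/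
open Set
open scoped RealInnerProductSpace

noncomputable section

/-!
Both `∂g` and `∇f` are monotone, and `∂g` is even `μg`-strongly monotone. Pairing the subgradients
`ξ⁰ ∈ ∂g(x⁰)` and `(1 - τ)ξ⁰ - τ∇f(x*_τ) ∈ ∂g(x*_τ)` gives
`μg ‖x⁰ - x*_τ‖² ≤ τ ⟪∇f(x*_τ) + ξ⁰, x⁰ - x*_τ⟫`, monotonicity of `∇f` replaces `∇f(x*_τ)` by `∇f(x⁰)`,
and Cauchy–Schwarz finishes.
-/

open Filter Topology

section

variable {E : Type*} [NormedAddCommGroup E] [InnerProductSpace ℝ E]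

theorem StrongConvexOn.inner_add_le_sub {s : Set E} {μ : ℝ} {g : E → ℝ} {v y z : E}
    (hg : StrongConvexOn s μ g) (hy : y ∈ s) (hv : ∀ w ∈ s, g y + ⟪v, w - y⟫ ≤ g w)
    (hz : z ∈ s) :
    ⟪v, z - y⟫ + μ / 2 * ‖z - y‖ ^ 2 ≤ g z - g y := by
  set c := μ / 2 * ‖z - y‖ ^ 2
  -- Along the segment `y + l • (z - y)`, dividing by `l` leaves `⟪v, z - y⟫ ≤ g z - g y - (1 - l) * c`;
  -- then let `l → 0⁺`.
  have hsegment : ∀ l ∈ Ioo (0 : ℝ) 1, ⟪v, z - y⟫ ≤ g z - g y - c + l * c := by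
    rintro l ⟨hl0, hl1⟩
    have hstrong := hg.2 hz hy hl0.le (sub_nonneg.2 hl1.le) (add_sub_cancel l 1)
    have hsub := hv _ (hg.1 hz hy hl0.le (sub_nonneg.2 hl1.le) (add_sub_cancel l 1))
    have hdir : l • z + (1 - l) • y - y = l • (z - y) := by
      rw [sub_smul, one_smul, smul_sub]; abel
    rw [hdir, real_inner_smul_right] at hsub
    change _ ≤ l • g z + (1 - l) • g y - l * (1 - l) * c at hstrong
    simp only [smul_eq_mul] at hstrong
    have : l * ⟪v, z - y⟫ ≤ l * (g z - g y - c + l * c) := by linarith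
    exact le_of_mul_le_mul_left this hl0
  have hlim : Tendsto (fun l : ℝ => g z - g y - c + l * c) (𝓝[>] 0) (𝓝 (g z - g y - c)) := by
    have : Continuous fun l : ℝ => g z - g y - c + l * c := by fun_prop
    simpa using this.continuousAt.tendsto.mono_left (nhdsWithin_le_nhds (a := (0 : ℝ)))
  have := ge_of_tendsto hlim (eventually_of_mem (Ioo_mem_nhdsGT one_pos) hsegment)
  linarith

theorem StrongConvexOn.mul_norm_sub_sq_le_inner {s : Set E} {μ : ℝ} {g : E → ℝ} {u v x y : E}
    (hg : StrongConvexOn s μ g) (hx : x ∈ s) (hy : y ∈ s)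
    (hu : ∀ w ∈ s, g x + ⟪u, w - x⟫ ≤ g w) (hv : ∀ w ∈ s, g y + ⟪v, w - y⟫ ≤ g w) :
    μ * ‖x - y‖ ^ 2 ≤ ⟪u - v, x - y⟫ := by
  have hux := hg.inner_add_le_sub hx hu hy
  have hvy := hg.inner_add_le_sub hy hv hx
  rw [norm_sub_rev, ← neg_sub x y, inner_neg_right] at hux
  rw [inner_sub_left]
  linarith

variable [CompleteSpace E]

theorem ConvexOn.add_inner_gradient_le {s : Set E} {f : E → ℝ} {f'x x y : E}
    (hf : ConvexOn ℝ s f) (hx : x ∈ s) (hy : y ∈ s) (hgrad : HasGradientAt f f'x x) :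
    f x + ⟪f'x, y - x⟫ ≤ f y := by
  let line : ℝ →ᵃ[ℝ] E := AffineMap.lineMap x y
  have hline : HasDerivAt (f ∘ line) ⟪f'x, y - x⟫ 0 := by
    have hgrad0 : HasGradientAt f f'x (line 0) := by simpa [line] using hgrad
    have := hgrad0.hasFDerivAt.comp_hasDerivAt (0 : ℝ) AffineMap.hasDerivAt_lineMap
    simpa [line, InnerProductSpace.toDual_apply_apply] using this
  have hslope := (hf.comp_affineMap line).le_slope_of_hasDerivAt
    (x := 0) (y := 1) (by simpa [line] using hx) (by simpa [line] using hy) one_pos hline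
  simp only [slope_def_field, Function.comp_apply, AffineMap.lineMap_apply_one,
    AffineMap.lineMap_apply_zero, sub_zero, div_one, line] at hslope
  linarith

theorem ConvexOn.inner_gradient_sub_nonneg {s : Set E} {f : E → ℝ} {f'x f'y x y : E}
    (hf : ConvexOn ℝ s f) (hx : x ∈ s) (hy : y ∈ s)
    (hgx : HasGradientAt f f'x x) (hgy : HasGradientAt f f'y y) :
    0 ≤ ⟪f'x - f'y, x - y⟫ := by
  have hxy := hf.add_inner_gradient_le hx hy hgx
  have hyx := hf.add_inner_gradient_le hy hx hgy
  rw [← neg_sub x y, inner_neg_right] at hxy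
  rw [inner_sub_left]
  linarith

end

theorem stmt_8_general {p : ℕ}
    (f g : Euc p → ℝ) (Dg : Set (Euc p))
    (f' : Euc p → Euc p)
    (μg t : ℝ)
    (x0 ξ0 xt : Euc p)
    -- `f` is differentiable and convex
    (hf_grad : ∀ z, HasGradientAt f (f' z) z)
    (hf_convex : ConvexOn ℝ univ f)
    -- `g` is proper, closed, and `μg`-strongly convex
    (hμg : 0 < μg)
    (hg_strong : StrongConvexOn Dg μg g)
    -- initial point and subgradient
    (hξ0 : IsSubgradient g Dg ξ0 x0)
    -- `xt` solves the parametric optimality condition at `t`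
    (ht : t ∈ Ioc (0 : ℝ) 1)
    (hxt : IsSubgradient g Dg ((1 - t) • ξ0 - t • f' xt) xt) :
    ‖x0 - xt‖ ≤ (t / μg) * ‖f' x0 + ξ0‖ := by
  have hg_mono := hg_strong.mul_norm_sub_sq_le_inner hξ0.1 hxt.1 hξ0.2 hxt.2
  have hf_mono := hf_convex.inner_gradient_sub_nonneg (mem_univ x0) (mem_univ xt)
    (hf_grad x0) (hf_grad xt)
  have hkey : μg * ‖x0 - xt‖ ^ 2 ≤ t * (‖f' x0 + ξ0‖ * ‖x0 - xt‖) :=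
    calc μg * ‖x0 - xt‖ ^ 2 ≤ ⟪ξ0 - ((1 - t) • ξ0 - t • f' xt), x0 - xt⟫ := hg_mono
      _ = t * ⟪f' x0 + ξ0, x0 - xt⟫ - t * ⟪f' x0 - f' xt, x0 - xt⟫ := by
        simp only [inner_sub_left, inner_add_left, real_inner_smul_left]; ring
      _ ≤ t * ⟪f' x0 + ξ0, x0 - xt⟫ := sub_le_self _ (mul_nonneg ht.1.le hf_mono)
      _ ≤ t * (‖f' x0 + ξ0‖ * ‖x0 - xt‖) := by gcongr; exacts [ht.1.le, real_inner_le_norm _ _]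
  rw [div_mul_eq_mul_div, le_div_iff₀ hμg]
  rcases (norm_nonneg (x0 - xt)).eq_or_lt with hzero | hpos
  · rw [← hzero, zero_mul]; exact mul_nonneg ht.1.le (norm_nonneg _)
  · exact le_of_mul_le_mul_right (by linarith) hpos

/-- Lemma: bound on `‖x⁰ - x*_τ‖₂` when `g` is strongly convex. -/
theorem stmt_8 {p : ℕ}
    (f g : Euc p → ℝ) (Dg : Set (Euc p))
    (f' : Euc p → Euc p)
    (μg t : ℝ)
    (x0 ξ0 xt : Euc p)
    -- `f` is differentiable and convex
    (hf_grad : ∀ z, HasGradientAt f (f' z) z)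
    (hf_convex : ConvexOn ℝ univ f)
    -- `g` is proper, closed, and `μg`-strongly convex
    (hg_proper : Dg.Nonempty)
    (hg_closed : ClosedOn g Dg)
    (hμg : 0 < μg)
    (hg_strong : StrongConvexOn Dg μg g)
    -- initial point and subgradient
    (hx0 : x0 ∈ Dg)
    (hξ0 : IsSubgradient g Dg ξ0 x0)
    -- `xt` solves the parametric optimality condition at `t`
    (ht : t ∈ Ioc (0 : ℝ) 1)
    (hxt : IsSubgradient g Dg ((1 - t) • ξ0 - t • f' xt) xt) :
    ‖x0 - xt‖ ≤ (t / μg) * ‖f' x0 + ξ0‖ :=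
  stmt_8_general f g Dg f' μg t x0 ξ0 xt hf_grad hf_convex hμg hg_strong hξ0 ht hxt

end
end

section
/- Let f : ℝ^p → ℝ be twice continuously differentiable, convex, and standard self-concordant with ∇²f(x) positive definite for all x, and let g : ℝ^p → ℝ ∪ {+∞} be proper, closed, and μ_g-strongly convex with μ_g > 0. Let x⁰ ∈ dom f ∩ dom g, ξ⁰ ∈ ∂g(x⁰) with ∇f(x⁰) + ξ⁰ ≠ 0, and β > 0. If τ₀ ∈ (0,1] satisfies τ₀ ≤ β μ_g / ( (1 + β)·λ_max(∇²f(x⁰))^{1/2}·‖∇f(x⁰) + ξ⁰‖₂ ), where λ_max(∇²f(x⁰)) is the maximum eigenvalue of ∇²f(x⁰), then the solution x*_{τ₀} of the parametric optimality condition at τ₀ satisfies ‖x⁰ − x*_{τ₀}‖_{x*_{τ₀}} ≤ β. -/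
open Set
open scoped RealInnerProductSpace

noncomputable section

/-!
Strong monotonicity of `∂g`, monotonicity of `∇f` and Cauchy–Schwarz give
`μ_g ‖x⁰ - x*_τ‖₂ ≤ τ ‖∇f(x⁰) + ξ⁰‖₂`, so by the choice of `τ₀` the local norm
`d := ‖x⁰ - x*_{τ₀}‖_{x⁰} ≤ λ_max^{1/2} ‖x⁰ - x*_{τ₀}‖₂` is at most `β / (1 + β) < 1`.
Self-concordance makes `s ↦ ⟪∇²f(c s) u, u⟫^{-1/2}` 1-Lipschitz along the segment `c`
from `x*_{τ₀}` to `x⁰`, which yields the Dikin-type bound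
`‖x⁰ - x*_{τ₀}‖_{x*_{τ₀}} ≤ d / (1 - d) ≤ β`.
-/

open Filter Topology

section Convexity

variable {p : ℕ} {g : Euc p → ℝ} {S : Set (Euc p)} {m : ℝ}

lemma IsSubgradient.add_inner_add_le (hg : StrongConvexOn S m g) {v x y : Euc p}
    (hv : IsSubgradient g S v y) (hx : x ∈ S) :
    g y + ⟪v, x - y⟫ + m / 2 * ‖x - y‖ ^ 2 ≤ g x := by
  -- compare both inequalities at `(1 - t) • y + t • x`, divide by `t`, and let `t → 0⁺`
  have key : ∀ t ∈ Ioc (0 : ℝ) 1,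
      ⟪v, x - y⟫ + (1 - t) * (m / 2 * ‖x - y‖ ^ 2) ≤ g x - g y := by
    rintro t ⟨ht0, ht1⟩
    have hconv := hg.2 hv.1 hx (sub_nonneg.2 ht1) ht0.le (sub_add_cancel 1 t)
    have hsub := hv.2 _ (hg.1 hv.1 hx (sub_nonneg.2 ht1) ht0.le (sub_add_cancel 1 t))
    rw [show (1 - t) • y + t • x - y = t • (x - y) by module, real_inner_smul_right] at hsub
    rw [norm_sub_rev] at hconv
    simp only [smul_eq_mul] at hconv
    refine le_of_mul_le_mul_left ?_ ht0
    linear_combination hsub + hconv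
  have hlim : Tendsto (fun t : ℝ => ⟪v, x - y⟫ + (1 - t) * (m / 2 * ‖x - y‖ ^ 2)) (𝓝[>] 0)
      (𝓝 (⟪v, x - y⟫ + m / 2 * ‖x - y‖ ^ 2)) := by
    have : Continuous fun t : ℝ => ⟪v, x - y⟫ + (1 - t) * (m / 2 * ‖x - y‖ ^ 2) := by fun_prop
    simpa using this.continuousWithinAt.tendsto (x := 0) (s := Ioi 0)
  have := le_of_tendsto hlim (eventually_of_mem (Ioc_mem_nhdsGT one_pos) key)
  linarith

lemma IsSubgradient.mul_norm_sub_sq_le_inner (hg : StrongConvexOn S m g) {v w x y : Euc p}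
    (hv : IsSubgradient g S v x) (hw : IsSubgradient g S w y) :
    m * ‖x - y‖ ^ 2 ≤ ⟪v - w, x - y⟫ := by
  have hxy := hv.add_inner_add_le hg hw.1
  have hyx := hw.add_inner_add_le hg hv.1
  rw [← neg_sub x y, inner_neg_right, norm_neg] at hxy
  rw [inner_sub_left]
  linarith

end Convexity

lemma inner_sub_sub_nonneg_of_hasFDerivAt {E : Type*} [NormedAddCommGroup E]
    [InnerProductSpace ℝ E] {F : E → E} {F' : E → E →L[ℝ] E}
    (hF : ∀ z, HasFDerivAt F (F' z) z) (hpsd : ∀ z u, 0 ≤ ⟪F' z u, u⟫) (x y : E) :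
    0 ≤ ⟪F x - F y, x - y⟫ := by
  have hφ : ∀ s : ℝ, HasDerivAt (fun s => ⟪F (AffineMap.lineMap y x s), x - y⟫)
      ⟪F' (AffineMap.lineMap y x s) (x - y), x - y⟫ s := fun s =>
    ((hF _).comp_hasDerivAt s AffineMap.hasDerivAt_lineMap).inner ℝ (hasDerivAt_const s _)
      |>.congr_deriv (by simp)
  have := monotone_of_hasDerivAt_nonneg hφ (fun s => hpsd _ _) zero_le_one
  simp only [AffineMap.lineMap_apply_zero, AffineMap.lineMap_apply_one] at this
  rw [inner_sub_left]
  linarith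

lemma IsSubgradient.mul_norm_sub_le {p : ℕ} {g : Euc p → ℝ} {S : Set (Euc p)} {m τ : ℝ}
    {F : Euc p → Euc p} {ξ x xτ : Euc p} (hg : StrongConvexOn S m g)
    (hF : ∀ x y, 0 ≤ ⟪F x - F y, x - y⟫) (hτ : 0 ≤ τ) (hξ : IsSubgradient g S ξ x)
    (hxτ : IsSubgradient g S ((1 - τ) • ξ - τ • F xτ) xτ) :
    m * ‖x - xτ‖ ≤ τ * ‖F x + ξ‖ := by
  have hFx : ⟪F xτ + ξ, x - xτ⟫ ≤ ⟪F x + ξ, x - xτ⟫ := by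
    have := hF x xτ
    rw [inner_sub_left] at this
    rw [inner_add_left, inner_add_left]
    linarith
  have key : m * ‖x - xτ‖ ^ 2 ≤ τ * ‖F x + ξ‖ * ‖x - xτ‖ :=
    calc m * ‖x - xτ‖ ^ 2 ≤ ⟪ξ - ((1 - τ) • ξ - τ • F xτ), x - xτ⟫ :=
          hξ.mul_norm_sub_sq_le_inner hg hxτ
      _ = τ * ⟪F xτ + ξ, x - xτ⟫ := by
          rw [show ξ - ((1 - τ) • ξ - τ • F xτ) = τ • (F xτ + ξ) by module,
            real_inner_smul_left]
      _ ≤ τ * (‖F x + ξ‖ * ‖x - xτ‖) :=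
          mul_le_mul_of_nonneg_left (hFx.trans (real_inner_le_norm _ _)) hτ
      _ = τ * ‖F x + ξ‖ * ‖x - xτ‖ := by ring
  rcases (norm_nonneg (x - xτ)).eq_or_lt with h0 | hpos
  · rw [← h0, mul_zero]
    exact mul_nonneg hτ (norm_nonneg _)
  · exact le_of_mul_le_mul_right (by linarith) hpos

lemma wnorm_le_sqrt_mul_norm {p : ℕ} {H : Euc p →L[ℝ] Euc p} {lmax : ℝ}
    (hH : ∀ w : Euc p, ‖w‖ = 1 → ⟪H w, w⟫ ≤ lmax) (u : Euc p) :
    wnorm H u ≤ √lmax * ‖u‖ := by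
  rcases eq_or_ne u 0 with rfl | hu
  · simp [wnorm]
  have hr : 0 < ‖u‖ := norm_pos_iff.2 hu
  have hunit : ‖‖u‖⁻¹ • u‖ = 1 := by
    rw [norm_smul, norm_inv, norm_norm, inv_mul_cancel₀ hr.ne']
  have hquad : ⟪H u, u⟫ ≤ lmax * ‖u‖ ^ 2 := by
    have := hH _ hunit
    rw [map_smul, real_inner_smul_left, real_inner_smul_right, ← mul_assoc,
      ← sq, inv_pow, inv_mul_le_iff₀ (by positivity)] at this
    linarith
  calc wnorm H u ≤ √(lmax * ‖u‖ ^ 2) := Real.sqrt_le_sqrt hquad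
    _ = √lmax * ‖u‖ := by rw [Real.sqrt_mul' _ (sq_nonneg _), Real.sqrt_sq hr.le]

lemma abs_rpow_neg_half_sub_le_one {ψ ψ' : ℝ → ℝ} (hψ : ∀ s, HasDerivAt ψ (ψ' s) s)
    (hpos : ∀ s, 0 < ψ s) (hbound : ∀ s, |ψ' s| ≤ 2 * ψ s ^ ((3 : ℝ) / 2)) :
    |ψ 1 ^ (-(1 / 2) : ℝ) - ψ 0 ^ (-(1 / 2) : ℝ)| ≤ 1 := by
  refine norm_image_sub_le_of_norm_deriv_le_segment_01'
    (fun s _ => ((hψ s).rpow_const (Or.inl (hpos s).ne')).hasDerivWithinAt) fun s _ => ?_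
  have hexp : ψ s ^ (-(1 / 2) - 1 : ℝ) = (ψ s ^ ((3 : ℝ) / 2))⁻¹ := by
    rw [← Real.rpow_neg (hpos s).le]
    norm_num
  have h32 : 0 < ψ s ^ ((3 : ℝ) / 2) := Real.rpow_pos_of_pos (hpos s) _
  rw [hexp, Real.norm_eq_abs, abs_mul, abs_mul, abs_inv, abs_of_pos h32,
    ← div_eq_mul_inv, div_le_one h32]
  norm_num
  linarith [hbound s]

section SelfConcordance

variable {p : ℕ} {H : Euc p → Euc p →L[ℝ] Euc p}
  {H' : Euc p → Euc p →L[ℝ] Euc p →L[ℝ] Euc p}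

lemma abs_inv_wnorm_sub_inv_wnorm_le_one (hH : ∀ z, HasFDerivAt H (H' z) z)
    (hpos : ∀ z u, u ≠ 0 → 0 < ⟪H z u, u⟫)
    (hsc : ∀ z u, |⟪H' z u u, u⟫| ≤ 2 * ⟪H z u, u⟫ ^ ((3 : ℝ) / 2)) {x y : Euc p}
    (hxy : x ≠ y) :
    |(wnorm (H x) (x - y))⁻¹ - (wnorm (H y) (x - y))⁻¹| ≤ 1 := by
  have hu : x - y ≠ 0 := sub_ne_zero.2 hxy
  have hψ : ∀ s : ℝ, HasDerivAt (fun s => ⟪H (AffineMap.lineMap y x s) (x - y), x - y⟫)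
      ⟪H' (AffineMap.lineMap y x s) (x - y) (x - y), x - y⟫ s := fun s =>
    (((hH _).comp_hasDerivAt s AffineMap.hasDerivAt_lineMap).clm_apply
      (hasDerivAt_const s _)).inner ℝ (hasDerivAt_const s _) |>.congr_deriv (by simp)
  have := abs_rpow_neg_half_sub_le_one hψ (fun s => hpos _ _ hu) (fun s => hsc _ _)
  simp only [AffineMap.lineMap_apply_zero, AffineMap.lineMap_apply_one] at this
  rwa [wnorm, wnorm, Real.sqrt_eq_rpow, Real.sqrt_eq_rpow, ← Real.rpow_neg (hpos _ _ hu).le,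
    ← Real.rpow_neg (hpos _ _ hu).le]

lemma wnorm_le_div_one_sub (hH : ∀ z, HasFDerivAt H (H' z) z)
    (hpos : ∀ z u, u ≠ 0 → 0 < ⟪H z u, u⟫)
    (hsc : ∀ z u, |⟪H' z u u, u⟫| ≤ 2 * ⟪H z u, u⟫ ^ ((3 : ℝ) / 2)) {x y : Euc p}
    (hxy : x ≠ y) (hlt : wnorm (H x) (x - y) < 1) :
    wnorm (H y) (x - y) ≤ wnorm (H x) (x - y) / (1 - wnorm (H x) (x - y)) := by
  have hu : x - y ≠ 0 := sub_ne_zero.2 hxy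
  have hd : 0 < wnorm (H x) (x - y) := Real.sqrt_pos.2 (hpos _ _ hu)
  have hw : 0 < wnorm (H y) (x - y) := Real.sqrt_pos.2 (hpos _ _ hu)
  have key := (abs_le.1 (abs_inv_wnorm_sub_inv_wnorm_le_one hH hpos hsc hxy)).2
  rw [le_div_iff₀ (by linarith)]
  field_simp at key
  linarith

end SelfConcordance

theorem stmt_13_general {p : ℕ}
    (g : Euc p → ℝ) (Dg : Set (Euc p))
    (f' : Euc p → Euc p)
    (f'' : Euc p → Euc p →L[ℝ] Euc p)
    (f''' : Euc p → Euc p →L[ℝ] Euc p →L[ℝ] Euc p)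
    (μg β τ0 lmax : ℝ)
    (x0 ξ0 xsol : Euc p)
    -- `f` is twice (indeed three times) continuously differentiable and convex, with
    -- positive definite Hessians, and standard self-concordant
    (hf_hess : ∀ z, HasFDerivAt f' (f'' z) z)
    (hf_third : ∀ z, HasFDerivAt f'' (f''' z) z)
    (hf_posdef : ∀ z, ∀ u : Euc p, u ≠ 0 → 0 < ⟪f'' z u, u⟫)
    (hf_sc : ∀ z, ∀ u : Euc p,
      |⟪f''' z u u, u⟫| ≤ 2 * ⟪f'' z u, u⟫ ^ ((3 : ℝ) / 2))
    -- `g` is proper, closed, and `μg`-strongly convex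
    (hμg : 0 < μg)
    (hg_strong : StrongConvexOn Dg μg g)
    -- initial point, subgradient, and `β`
    (hξ0 : IsSubgradient g Dg ξ0 x0)
    (hβ : 0 < β)
    -- `lmax` is the maximum eigenvalue of `∇²f(x⁰)`
    (hlmax : IsGreatest {r : ℝ | ∃ u : Euc p, ‖u‖ = 1 ∧ r = ⟪f'' x0 u, u⟫} lmax)
    -- the choice of `τ₀`
    (hτ0 : τ0 ∈ Ioc (0 : ℝ) 1)
    (hτ0_le : τ0 ≤ β * μg / ((1 + β) * Real.sqrt lmax * ‖f' x0 + ξ0‖))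
    -- `xsol` solves the parametric optimality condition at `τ₀`
    (hxsol : IsSubgradient g Dg ((1 - τ0) • ξ0 - τ0 • f' xsol) xsol) :
    wnorm (f'' xsol) (x0 - xsol) ≤ β := by
  rcases eq_or_ne x0 xsol with rfl | hne
  · simpa [wnorm] using hβ.le
  have hpsd : ∀ z u, 0 ≤ ⟪f'' z u, u⟫ := fun z u => by
    rcases eq_or_ne u 0 with rfl | hu
    exacts [by simp, (hf_posdef z u hu).le]
  have hdist : μg * ‖x0 - xsol‖ ≤ τ0 * ‖f' x0 + ξ0‖ :=
    hξ0.mul_norm_sub_le hg_strong (inner_sub_sub_nonneg_of_hasFDerivAt hf_hess hpsd)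
      hτ0.1.le hxsol
  have hlocal : wnorm (f'' x0) (x0 - xsol) ≤ √lmax * ‖x0 - xsol‖ :=
    wnorm_le_sqrt_mul_norm (fun w hw => hlmax.2 ⟨w, hw, rfl⟩) _
  have hτ : τ0 * ((1 + β) * √lmax * ‖f' x0 + ξ0‖) ≤ β * μg :=
    mul_le_of_le_div₀ (by positivity) (by positivity) hτ0_le
  set d := wnorm (f'' x0) (x0 - xsol)
  have hd : d * (1 + β) ≤ β := by
    refine le_of_mul_le_mul_left ?_ hμg
    calc μg * (d * (1 + β)) ≤ μg * (√lmax * ‖x0 - xsol‖ * (1 + β)) := by gcongr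
      _ = (1 + β) * √lmax * (μg * ‖x0 - xsol‖) := by ring
      _ ≤ (1 + β) * √lmax * (τ0 * ‖f' x0 + ξ0‖) := by gcongr
      _ ≤ μg * β := by linarith
  have hd1 : d < 1 := by nlinarith [Real.sqrt_nonneg ⟪f'' x0 (x0 - xsol), x0 - xsol⟫]
  calc wnorm (f'' xsol) (x0 - xsol) ≤ d / (1 - d) :=
        wnorm_le_div_one_sub hf_third hf_posdef hf_sc hne hd1
    _ ≤ β := by rw [div_le_iff₀ (by linarith)]; linarith

/-- The choice of `τ₀` when `g` is strongly convex guarantees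
`‖x⁰ - x*_{τ₀}‖_{x*_{τ₀}} ≤ β`. -/
theorem stmt_13 {p : ℕ}
    (f g : Euc p → ℝ) (Dg : Set (Euc p))
    (f' : Euc p → Euc p)
    (f'' : Euc p → Euc p →L[ℝ] Euc p)
    (f''' : Euc p → Euc p →L[ℝ] Euc p →L[ℝ] Euc p)
    (μg β τ0 lmax : ℝ)
    (x0 ξ0 xsol : Euc p)
    -- `f` is twice (indeed three times) continuously differentiable and convex, with
    -- positive definite Hessians, and standard self-concordant
    (hf_smooth : ContDiff ℝ 3 f)
    (hf_convex : ConvexOn ℝ univ f)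
    (hf_grad : ∀ z, HasGradientAt f (f' z) z)
    (hf_hess : ∀ z, HasFDerivAt f' (f'' z) z)
    (hf_third : ∀ z, HasFDerivAt f'' (f''' z) z)
    (hf_posdef : ∀ z, ∀ u : Euc p, u ≠ 0 → 0 < ⟪f'' z u, u⟫)
    (hf_sc : ∀ z, ∀ u : Euc p,
      |⟪f''' z u u, u⟫| ≤ 2 * ⟪f'' z u, u⟫ ^ ((3 : ℝ) / 2))
    -- `g` is proper, closed, and `μg`-strongly convex
    (hg_proper : Dg.Nonempty)
    (hg_closed : ClosedOn g Dg)
    (hμg : 0 < μg)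
    (hg_strong : StrongConvexOn Dg μg g)
    -- initial point, subgradient, and `β`
    (hx0 : x0 ∈ Dg)
    (hξ0 : IsSubgradient g Dg ξ0 x0)
    (hne : f' x0 + ξ0 ≠ 0)
    (hβ : 0 < β)
    -- `lmax` is the maximum eigenvalue of `∇²f(x⁰)`
    (hlmax : IsGreatest {r : ℝ | ∃ u : Euc p, ‖u‖ = 1 ∧ r = ⟪f'' x0 u, u⟫} lmax)
    -- the choice of `τ₀`
    (hτ0 : τ0 ∈ Ioc (0 : ℝ) 1)
    (hτ0_le : τ0 ≤ β * μg / ((1 + β) * Real.sqrt lmax * ‖f' x0 + ξ0‖))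
    -- `xsol` solves the parametric optimality condition at `τ₀`
    (hxsol : IsSubgradient g Dg ((1 - τ0) • ξ0 - τ0 • f' xsol) xsol) :
    wnorm (f'' xsol) (x0 - xsol) ≤ β :=
  stmt_13_general g Dg f' f'' f''' μg β τ0 lmax x0 ξ0 xsol hf_hess hf_third hf_posdef hf_sc hμg
    hg_strong hξ0 hβ hlmax hτ0 hτ0_le hxsol

end
end

section
/- Let H be a symmetric positive definite p×p real matrix, c ∈ ℝ^p, x₀ ∈ ℝ^p, and let h : ℝ^p → ℝ ∪ {+∞} be proper, closed, and convex. Define P(x) := ⟨c, x − x₀⟩ + (1/2)⟨H(x − x₀), x − x₀⟩ + h(x) and let x̄ be the minimizer of P. Then for every x, (1/2)⟨H(x − x̄), x − x̄⟩ ≤ P(x) − P(x̄); consequently, if P(x) − P(x̄) ≤ δ²/2 for some δ ≥ 0, then ⟨H(x − x̄), x − x̄⟩^{1/2} ≤ δ. -/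
open Set
open scoped RealInnerProductSpace

noncomputable section

/-- Quadratic growth of the composite quadratic model `P` around its
minimizer, and the resulting accuracy bound in the weighted norm. -/
theorem stmt_14 {p : ℕ}
    (H : Euc p →L[ℝ] Euc p) (c x0 xbar : Euc p)
    (h : Euc p → ℝ) (Dh : Set (Euc p))
    (P : Euc p → ℝ)
    -- `H` is symmetric positive definite
    (hH_symm : ∀ u v : Euc p, ⟪H u, v⟫ = ⟪u, H v⟫)
    (hH_pos : ∀ u : Euc p, u ≠ 0 → 0 < ⟪H u, u⟫)
    -- `h` is proper, closed, convex
    (hh_proper : Dh.Nonempty)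
    (hh_convex : ConvexOn ℝ Dh h)
    (hh_closed : ClosedOn h Dh)
    -- the model `P`
    (hP : ∀ u, P u = ⟪c, u - x0⟫ + (1 / 2) * ⟪H (u - x0), u - x0⟫ + h u)
    -- `xbar` is the minimizer of `P`
    (hxbar : xbar ∈ Dh ∧ ∀ u ∈ Dh, P xbar ≤ P u) :
    ∀ x ∈ Dh,
      (1 / 2) * ⟪H (x - xbar), x - xbar⟫ ≤ P x - P xbar ∧
      ∀ δ : ℝ, 0 ≤ δ → P x - P xbar ≤ δ ^ 2 / 2 →
        Real.sqrt ⟪H (x - xbar), x - xbar⟫ ≤ δ := by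
  obtain ⟨hxbarD, hxbarmin⟩ := hxbar
  intro x hxD
  set a : Euc p := xbar - x0 with ha
  set b : Euc p := x - xbar with hb
  set A : ℝ := ⟪H (x - xbar), x - xbar⟫ with hA
  have hD0 : 0 ≤ P x - P xbar := sub_nonneg.2 (hxbarmin x hxD)
  have hA0 : 0 ≤ A := by
    rcases eq_or_ne (x - xbar) 0 with h0 | h0
    · simp [hA, h0]
    · exact (hH_pos _ h0).le
  have hsymm : ∀ u v : Euc p, ⟪H u, v⟫ = ⟪H v, u⟫ := by
    intro u v; rw [hH_symm]; exact real_inner_comm _ _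
  have key : ∀ t : ℝ, 0 < t → t ≤ 1 → (1 - t) / 2 * A ≤ P x - P xbar := by
    intro t ht0 ht1
    have hmem : xbar + t • b ∈ Dh := by
      have := hh_convex.1 hxbarD hxD (by linarith : (0:ℝ) ≤ 1 - t) ht0.le
        (by ring)
      convert this using 1
      simp only [hb]
      module
    have hconv : h (xbar + t • b) ≤ (1 - t) * h xbar + t * h x := by
      have := hh_convex.2 hxbarD hxD (by linarith : (0:ℝ) ≤ 1 - t) ht0.le
        (by ring)
      have heq : (1 - t) • xbar + t • x = xbar + t • b := by
        simp only [hb]; module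
      rw [heq] at this
      simpa [smul_eq_mul] using this
    have hmin := hxbarmin _ hmem
    have hxt : (xbar + t • b) - x0 = a + t • b := by simp only [ha, hb]; module
    have hxx : x - x0 = a + b := by simp only [ha, hb]; module
    have hAb : A = ⟪H b, b⟫ := by rw [hA, hb]
    have e1 : ∀ s : ℝ, ⟪c, a + s • b⟫ = ⟪c, a⟫ + s * ⟪c, b⟫ := by
      intro s; rw [inner_add_right, real_inner_smul_right]
    have e2 : ∀ s : ℝ, ⟪H (a + s • b), a + s • b⟫
        = ⟪H a, a⟫ + 2 * s * ⟪H a, b⟫ + s ^ 2 * ⟪H b, b⟫ := by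
      intro s
      have hHs : H (a + s • b) = H a + s • H b := by simp
      rw [hHs]
      simp only [inner_add_left, inner_add_right, real_inner_smul_left,
        real_inner_smul_right, hsymm b a]
      ring
    have e1' : ⟪c, a + b⟫ = ⟪c, a⟫ + ⟪c, b⟫ := by
      have := e1 1; rw [one_smul] at this; linarith
    have e2' : ⟪H (a + b), a + b⟫ = ⟪H a, a⟫ + 2 * ⟪H a, b⟫ + ⟪H b, b⟫ := by
      have := e2 1; rw [one_smul] at this; rw [this]; ring
    rw [hP (xbar + t • b), hP xbar, hxt, e1 t, e2 t] at hmin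
    rw [hP x, hP xbar, hxx, e1', e2', hAb]
    nlinarith [hmin, hconv]
  have main : (1 / 2) * A ≤ P x - P xbar := by
    by_contra hcon
    push_neg at hcon
    have hApos : 0 < A := by nlinarith
    have hDlt : P x - P xbar < A / 2 := by linarith
    set t : ℝ := (A - 2 * (P x - P xbar)) / (2 * A) with htdef
    have ht0 : 0 < t := div_pos (by linarith) (by linarith)
    have ht1 : t ≤ 1 := by
      rw [htdef, div_le_one (by linarith)]
      linarith
    have hk := key t ht0 ht1
    have hteq : t * (2 * A) = A - 2 * (P x - P xbar) := by
      rw [htdef]; field_simp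
    nlinarith [hk, hteq]
  refine ⟨main, ?_⟩
  intro δ hδ hbound
  have hAle : A ≤ δ ^ 2 := by nlinarith
  calc Real.sqrt A ≤ Real.sqrt (δ ^ 2) := Real.sqrt_le_sqrt hAle
    _ = δ := by rw [Real.sqrt_sq hδ]

end
end

section
/- Let H be a symmetric positive definite n×n real matrix, c, y ∈ ℝ^n, τ > 0, δ ≥ 0, and let ψ : ℝ^n → ℝ ∪ {+∞} be proper, closed, and convex with Fenchel conjugate ψ*(v) := sup_u { ⟨v, u⟩ − ψ(u) }. Define P(w) := ⟨c, w − y⟩ + (1/2)⟨H(w − y), w − y⟩ + (1/τ)ψ*(w) and let ȳ be the minimizer of P. Suppose z ∈ ℝ^n and ẽ ∈ ℝ^n satisfy ⟨Hẽ, ẽ⟩^{1/2} ≤ δ and w⁺ := y − H^{-1}(c + z) + ẽ ∈ ∂ψ(τz). Then P(w⁺) − P(ȳ) ≤ δ²/2. -/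
open Set
open scoped RealInnerProductSpace

noncomputable section

/-- Lemma: the point reconstructed from a `δ`-approximate solution of
the dualized subproblem is a `δ`-approximate minimizer of the dual subproblem `P`. -/
theorem stmt_15 {n : ℕ}
    (H Hinv : Euc n →L[ℝ] Euc n) (c y z etil ybar : Euc n)
    (τ δ : ℝ)
    (ψ ψs : Euc n → ℝ) (Dψ Dψs : Set (Euc n))
    (P : Euc n → ℝ)
    -- `H` is symmetric positive definite, with inverse `Hinv`
    (hH_symm : ∀ u v : Euc n, ⟪H u, v⟫ = ⟪u, H v⟫)
    (hH_pos : ∀ u : Euc n, u ≠ 0 → 0 < ⟪H u, u⟫)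
    (hHinv : ∀ u : Euc n, H (Hinv u) = u ∧ Hinv (H u) = u)
    -- parameters
    (hτ : 0 < τ) (hδ : 0 ≤ δ)
    -- `ψ` is proper, closed, convex
    (hψ_proper : Dψ.Nonempty)
    (hψ_convex : ConvexOn ℝ Dψ ψ)
    (hψ_closed : ClosedOn ψ Dψ)
    -- `ψs` is the Fenchel conjugate of `ψ`, with effective domain `Dψs`
    (hψs_dom : ∀ v : Euc n, v ∈ Dψs ↔ BddAbove {r : ℝ | ∃ u ∈ Dψ, r = ⟪v, u⟫ - ψ u})
    (hψs : ∀ v ∈ Dψs, IsLUB {r : ℝ | ∃ u ∈ Dψ, r = ⟪v, u⟫ - ψ u} (ψs v))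
    -- the model `P(w) := ⟪c, w - y⟫ + ½⟪H(w - y), w - y⟫ + (1/τ)ψ*(w)`
    (hP : ∀ w, P w = ⟪c, w - y⟫ + (1 / 2) * ⟪H (w - y), w - y⟫ + (1 / τ) * ψs w)
    -- `ybar` is the minimizer of `P`
    (hybar : ybar ∈ Dψs ∧ ∀ w ∈ Dψs, P ybar ≤ P w)
    -- the error `ẽ` is `δ`-small in the `H`-norm
    (hetil : Real.sqrt ⟪H etil, etil⟫ ≤ δ)
    -- `w⁺ := y - H⁻¹(c + z) + ẽ` is a subgradient of `ψ` at `τ·z`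
    (hsub : IsSubgradient ψ Dψ (y - Hinv (c + z) + etil) (τ • z)) :
    (y - Hinv (c + z) + etil) ∈ Dψs ∧
    P (y - Hinv (c + z) + etil) - P ybar ≤ δ ^ 2 / 2 := by
  obtain ⟨hτz, hgrad⟩ := hsub
  set wp := y - Hinv (c + z) + etil with hwp
  have hub : (⟪wp, τ • z⟫ - ψ (τ • z)) ∈ upperBounds {r : ℝ | ∃ u ∈ Dψ, r = ⟪wp, u⟫ - ψ u} := by
    rintro r ⟨u, hu, rfl⟩
    have h := hgrad u hu
    rw [inner_sub_right] at h
    linarith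
  have hmem : wp ∈ Dψs := (hψs_dom wp).2 ⟨_, hub⟩
  have lub := hψs wp hmem
  have h1 : ψs wp = ⟪wp, τ • z⟫ - ψ (τ • z) :=
    le_antisymm (lub.2 hub) (lub.1 ⟨τ • z, hτz, rfl⟩)
  have h2 : ⟪ybar, τ • z⟫ - ψ (τ • z) ≤ ψs ybar :=
    (hψs ybar hybar.1).1 ⟨τ • z, hτz, rfl⟩
  refine ⟨hmem, ?_⟩
  set a := wp - y with ha
  set b := ybar - y with hb
  have hea : etil - a = Hinv (c + z) := by rw [ha, hwp]; abel
  have h3 : H (etil - a) = c + z := by rw [hea]; exact (hHinv (c + z)).1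
  have h4 : ⟪H etil, etil⟫ ≤ δ ^ 2 := by
    have hnn : 0 ≤ ⟪H etil, etil⟫ := by
      rcases eq_or_ne etil 0 with h | h
      · simp [h]
      · exact (hH_pos etil h).le
    nlinarith [Real.sq_sqrt hnn, Real.sqrt_nonneg ⟪H etil, etil⟫]
  set u := a - b - etil with hu
  have h5 : 0 ≤ ⟪H u, u⟫ := by
    rcases eq_or_ne u 0 with h | h
    · simp [h]
    · exact (hH_pos u h).le
  have symm : ∀ v w : Euc n, ⟪H v, w⟫ = ⟪H w, v⟫ := fun v w => by
    rw [hH_symm, real_inner_comm]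
  have h6 : ⟪H u, u⟫ = ⟪H a, a⟫ - 2 * ⟪H a, b⟫ + ⟪H b, b⟫ - 2 * ⟪H etil, a⟫
      + 2 * ⟪H etil, b⟫ + ⟪H etil, etil⟫ := by
    have e1 := symm a b
    have e2 := symm a etil
    have e3 := symm b etil
    simp only [hu, map_sub, inner_sub_left, inner_sub_right]
    linarith
  have hab : wp - ybar = a - b := by rw [ha, hb]; abel
  have h7 : ⟪c, wp - ybar⟫ + ⟪z, wp - ybar⟫
      = ⟪H etil, a⟫ - ⟪H etil, b⟫ - ⟪H a, a⟫ + ⟪H a, b⟫ := by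
    rw [← inner_add_left, ← h3, hab]
    simp only [map_sub, inner_sub_left, inner_sub_right]
    ring
  have h8w : ⟪wp, τ • z⟫ = τ * ⟪z, wp⟫ := by
    rw [real_inner_smul_right, real_inner_comm]
  have h8y : ⟪ybar, τ • z⟫ = τ * ⟪z, ybar⟫ := by
    rw [real_inner_smul_right, real_inner_comm]
  have h9 : (1 / τ) * (ψs wp - ψs ybar) ≤ ⟪z, wp⟫ - ⟪z, ybar⟫ := by
    have hd : ψs wp - ψs ybar ≤ τ * (⟪z, wp⟫ - ⟪z, ybar⟫) := by
      rw [mul_sub, ← h8w, ← h8y]; linarith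
    have hmul := mul_le_mul_of_nonneg_left hd (by positivity : (0:ℝ) ≤ 1 / τ)
    rw [one_div, inv_mul_cancel_left₀ hτ.ne'] at hmul; rw [one_div]; exact hmul
  have hc : ⟪c, wp - ybar⟫ = ⟪c, a⟫ - ⟪c, b⟫ := by
    rw [ha, hb]
    simp only [inner_sub_right]
    ring
  have hz : ⟪z, wp - ybar⟫ = ⟪z, wp⟫ - ⟪z, ybar⟫ := inner_sub_right z wp ybar
  rw [hP wp, hP ybar, ← ha, ← hb]
  linarith

end
end

section
/- Let f : ℝ^p → ℝ ∪ {+∞} and ψ : ℝ^n → ℝ ∪ {+∞} be proper, closed, convex functions, D an n×p real matrix, and let f*, ψ* denote the Fenchel conjugates f*(u) := sup_x { ⟨u, x⟩ − f(x) } and ψ*(v) := sup_w { ⟨v, w⟩ − ψ(w) }. Suppose y* ∈ ℝ^n is such that f* is differentiable at −Dᵀy* and 0 ∈ −D∇f*(−Dᵀy*) + ∂ψ*(y*). Then x* := ∇f*(−Dᵀy*) is a global minimizer of x ↦ f(x) + ψ(Dx) over ℝ^p. -/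
open Set
open scoped RealInnerProductSpace

noncomputable section

/-- Fenchel–Young inequality, from the LUB description of the conjugate. -/
private lemma fenchel_young {p : ℕ} {f : Euc p → ℝ} {Df : Set (Euc p)} {fs : Euc p → ℝ}
    {Dfs : Set (Euc p)}
    (hfs : ∀ v ∈ Dfs, IsLUB {r : ℝ | ∃ u ∈ Df, r = ⟪v, u⟫ - f u} (fs v))
    {v : Euc p} (hv : v ∈ Dfs) {u : Euc p} (hu : u ∈ Df) :
    ⟪v, u⟫ - f u ≤ fs v :=
  (hfs v hv).1 ⟨u, hu, rfl⟩

/-- The conjugate is convex on its effective domain. -/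
private lemma conj_convexOn {p : ℕ} {f : Euc p → ℝ} {Df : Set (Euc p)} {fs : Euc p → ℝ}
    {Dfs : Set (Euc p)}
    (hfs_dom : ∀ v : Euc p, v ∈ Dfs ↔ BddAbove {r : ℝ | ∃ u ∈ Df, r = ⟪v, u⟫ - f u})
    (hfs : ∀ v ∈ Dfs, IsLUB {r : ℝ | ∃ u ∈ Df, r = ⟪v, u⟫ - f u} (fs v)) :
    ConvexOn ℝ Dfs fs := by
  have hub : ∀ z1 ∈ Dfs, ∀ z2 ∈ Dfs, ∀ t s : ℝ, 0 ≤ t → 0 ≤ s → t + s = 1 →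
      ∀ r ∈ {r : ℝ | ∃ u ∈ Df, r = ⟪t • z1 + s • z2, u⟫ - f u}, r ≤ t * fs z1 + s * fs z2 := by
    rintro z1 hz1 z2 hz2 t s ht hs hts r ⟨u, hu, rfl⟩
    have h1 : ⟪z1, u⟫ - f u ≤ fs z1 := fenchel_young hfs hz1 hu
    have h2 : ⟪z2, u⟫ - f u ≤ fs z2 := fenchel_young hfs hz2 hu
    have : ⟪t • z1 + s • z2, u⟫ = t * ⟪z1, u⟫ + s * ⟪z2, u⟫ := by
      rw [inner_add_left, real_inner_smul_left, real_inner_smul_left]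
    rw [this]
    have h1' := mul_le_mul_of_nonneg_left h1 ht
    have h2' := mul_le_mul_of_nonneg_left h2 hs
    rw [mul_sub] at h1' h2'
    have hfu : t * f u + s * f u = f u := by rw [← add_mul, hts, one_mul]
    linarith
  have hcvx : Convex ℝ Dfs := by
    intro z1 hz1 z2 hz2 t s ht hs hts
    rw [hfs_dom]
    exact ⟨t * fs z1 + s * fs z2, fun r hr => hub z1 hz1 z2 hz2 t s ht hs hts r hr⟩
  refine ⟨hcvx, fun z1 hz1 z2 hz2 t s ht hs hts => ?_⟩
  exact (hfs _ (hcvx hz1 hz2 ht hs hts)).2 (fun r hr => hub z1 hz1 z2 hz2 t s ht hs hts r hr)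

/-- A subgradient point of the conjugate lies in the domain of the original (proper,
closed, convex) function, and Fenchel–Young holds with equality there. -/
private lemma subgrad_biconj {p : ℕ} {f : Euc p → ℝ} {Df : Set (Euc p)} {fs : Euc p → ℝ}
    {Dfs : Set (Euc p)}
    (hf_proper : Df.Nonempty) (hf_convex : ConvexOn ℝ Df f) (hf_closed : ClosedOn f Df)
    (hfs_dom : ∀ v : Euc p, v ∈ Dfs ↔ BddAbove {r : ℝ | ∃ u ∈ Df, r = ⟪v, u⟫ - f u})
    (hfs : ∀ v ∈ Dfs, IsLUB {r : ℝ | ∃ u ∈ Df, r = ⟪v, u⟫ - f u} (fs v))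
    {x v : Euc p} (hsub : IsSubgradient fs Dfs x v) :
    x ∈ Df ∧ f x + fs v = ⟪v, x⟫ := by
  obtain ⟨hv, hsub2⟩ := hsub
  set M : ℝ := ⟪v, x⟫ - fs v with hMdef
  have hM : ∀ z ∈ Dfs, ⟪x, z⟫ - fs z ≤ M := by
    intro z hz
    have h := hsub2 z hz
    rw [inner_sub_right] at h
    have hc : ⟪v, x⟫ = ⟪x, v⟫ := real_inner_comm x v
    simp only [hMdef, hc]
    linarith
  set E : Set (Euc p × ℝ) := {q : Euc p × ℝ | q.1 ∈ Df ∧ f q.1 ≤ q.2} with hEdef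
  have hEconv : Convex ℝ E := by
    rintro ⟨u1, r1⟩ ⟨hu1, hr1⟩ ⟨u2, r2⟩ ⟨hu2, hr2⟩ t s ht hs hts
    refine ⟨hf_convex.1 hu1 hu2 ht hs hts, ?_⟩
    have := hf_convex.2 hu1 hu2 ht hs hts
    have h1 : t * f u1 ≤ t * r1 := mul_le_mul_of_nonneg_left hr1 ht
    have h2 : s * f u2 ≤ s * r2 := mul_le_mul_of_nonneg_left hr2 hs
    simp only [Prod.smul_mk, Prod.mk_add_mk, smul_eq_mul] at *
    linarith
  have hxE : (x, M) ∈ E := by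
    by_contra hxE
    obtain ⟨ℓ, c, hlt, hgt⟩ := geometric_hahn_banach_point_closed hEconv hf_closed hxE
    set b : ℝ := ℓ (0, 1) with hbdef
    have hdecomp : ∀ (u : Euc p) (r : ℝ), ℓ (u, r) = ℓ (u, 0) + r * b := by
      intro u r
      have h : (u, r) = (u, (0:ℝ)) + r • ((0 : Euc p), (1:ℝ)) := by
        simp [Prod.ext_iff]
      rw [h, map_add, map_smul, smul_eq_mul]
    obtain ⟨u0, hu0⟩ := hf_proper
    have hb : 0 ≤ b := by
      by_contra hb
      push_neg at hb
      set r : ℝ := max (f u0) ((c - ℓ (u0, 0)) / b) with hrdef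
      have h1 : (u0, r) ∈ E := ⟨hu0, le_max_left _ _⟩
      have h2 : c < ℓ (u0, r) := hgt _ h1
      rw [hdecomp] at h2
      have h3 : (c - ℓ (u0, 0)) / b ≤ r := le_max_right _ _
      have h4 : r * b ≤ ((c - ℓ (u0, 0)) / b) * b :=
        mul_le_mul_of_nonpos_right h3 (le_of_lt hb)
      rw [div_mul_cancel₀ _ (ne_of_lt hb)] at h4
      linarith
    set a : Euc p := (InnerProductSpace.toDual ℝ (Euc p)).symm
      (ℓ.comp (ContinuousLinearMap.inl ℝ (Euc p) ℝ)) with hadef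
    have ha : ∀ u : Euc p, ⟪a, u⟫ = ℓ (u, 0) := by
      intro u
      rw [hadef, InnerProductSpace.toDual_symm_apply]
      simp
    have hax : ⟪a, x⟫ + M * b < c := by
      have := hlt
      rw [hdecomp, ← ha] at this
      linarith
    rcases eq_or_lt_of_le hb with hb0 | hbpos
    · -- b = 0 : translate v by -a to contradict boundedness
      have hcu : ∀ u ∈ Df, c < ⟪a, u⟫ := by
        intro u hu
        have h := hgt (u, f u) ⟨hu, le_refl _⟩
        rw [hdecomp, ← ha, ← hb0, mul_zero, add_zero] at h
        exact h
      have hub : ∀ r ∈ {r : ℝ | ∃ u ∈ Df, r = ⟪v - a, u⟫ - f u}, r ≤ fs v - c := by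
        rintro r ⟨u, hu, rfl⟩
        have h1 : ⟪v, u⟫ - f u ≤ fs v := fenchel_young hfs hv hu
        have h2 : c < ⟪a, u⟫ := hcu u hu
        rw [inner_sub_left]
        linarith
      have hzdom : v - a ∈ Dfs := (hfs_dom _).2 ⟨fs v - c, fun r hr => hub r hr⟩
      have hfz : fs (v - a) ≤ fs v - c := (hfs _ hzdom).2 (fun r hr => hub r hr)
      have h := hM _ hzdom
      rw [inner_sub_right] at h
      have hc2 : ⟪x, a⟫ = ⟪a, x⟫ := real_inner_comm a x
      have hc3 : ⟪x, v⟫ = ⟪v, x⟫ := real_inner_comm v x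
      rw [← hb0, mul_zero, add_zero] at hax
      simp only [hMdef] at h
      linarith
    · -- b > 0 : z := -(b⁻¹ • a) belongs to Dfs with fs z ≤ -c/b
      set z : Euc p := -(b⁻¹ • a) with hzdef
      have hinz : ∀ u : Euc p, ⟪z, u⟫ = -(b⁻¹ * ⟪a, u⟫) := by
        intro u
        rw [hzdef, inner_neg_left, real_inner_smul_left]
      have hub : ∀ r ∈ {r : ℝ | ∃ u ∈ Df, r = ⟪z, u⟫ - f u}, r ≤ -(c / b) := by
        rintro r ⟨u, hu, rfl⟩
        have h := hgt (u, f u) ⟨hu, le_refl _⟩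
        rw [hdecomp, ← ha] at h
        rw [hinz]
        have hbne : b ≠ 0 := ne_of_gt hbpos
        have key : b * (-(b⁻¹ * ⟪a, u⟫) - f u) ≤ b * (-(c / b)) := by
          have e1 : b * (-(b⁻¹ * ⟪a, u⟫) - f u) = -(⟪a, u⟫) - b * f u := by field_simp
          have e2 : b * (-(c / b)) = -c := by field_simp
          rw [e1, e2]; nlinarith
        exact le_of_mul_le_mul_left key hbpos
      have hzdom : z ∈ Dfs := (hfs_dom _).2 ⟨-(c / b), fun r hr => hub r hr⟩
      have hfz : fs z ≤ -(c / b) := (hfs _ hzdom).2 (fun r hr => hub r hr)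
      have h := hM _ hzdom
      have hc2 : ⟪x, z⟫ = ⟪z, x⟫ := real_inner_comm z x
      rw [hc2, hinz] at h
      have h5 : -(b⁻¹ * ⟪a, x⟫) + c / b ≤ M := by linarith
      have h6 := mul_le_mul_of_nonneg_left h5 hbpos.le
      have e : b * (-(b⁻¹ * ⟪a, x⟫) + c / b) = -⟪a, x⟫ + c := by field_simp
      rw [e] at h6
      have hcomm : b * M = M * b := mul_comm b M
      linarith
  obtain ⟨hxDf, hfx⟩ := hxE
  have hge : ⟪v, x⟫ - f x ≤ fs v := fenchel_young hfs hv hxDf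
  refine ⟨hxDf, by simp only [hMdef] at hfx; linarith⟩

/-- For a convex function, a gradient within the (convex) domain is a subgradient. -/
private lemma grad_subgrad {p : ℕ} {g : Euc p → ℝ} {S : Set (Euc p)}
    (hg : ConvexOn ℝ S g) {x v : Euc p} (hv : v ∈ S)
    (hd : HasGradientWithinAt g x S v) : IsSubgradient g S x v := by
  refine ⟨hv, fun z hz => ?_⟩
  rcases eq_or_ne z v with rfl | hne
  · simp
  set γ : ℝ → Euc p := fun t => v + t • (z - v) with hγdef
  have hγmem : ∀ t ∈ Icc (0:ℝ) 1, γ t ∈ S := by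
    intro t ht
    have h := hg.1 hv hz (by linarith [ht.2] : (0:ℝ) ≤ 1 - t) ht.1 (by ring)
    have : γ t = (1 - t) • v + t • z := by
      simp only [hγdef, smul_sub, sub_smul, one_smul]
      abel
    rw [this]; exact h
  have hγ0 : γ 0 = v := by simp [hγdef]
  have hγd : HasDerivAt γ (z - v) 0 := by
    have : HasDerivAt (fun t : ℝ => t • (z - v)) ((1:ℝ) • (z - v)) 0 :=
      (hasDerivAt_id 0).smul_const (z - v)
    simpa [hγdef, one_smul] using this.const_add v
  have hcomp : HasDerivWithinAt (g ∘ γ) ⟪x, z - v⟫ (Icc 0 1) 0 := by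
    have hmaps : MapsTo γ (Icc (0:ℝ) 1) S := fun t ht => hγmem t ht
    have hd' : HasFDerivWithinAt g (InnerProductSpace.toDual ℝ (Euc p) x) S (γ 0) := by
      rw [hγ0]; exact hd
    have := hd'.comp_hasDerivWithinAt 0 (hγd.hasDerivWithinAt) hmaps
    simpa [InnerProductSpace.toDual_apply_apply] using this
  have hslope : ∀ t ∈ Icc (0:ℝ) 1 \ {0}, slope (g ∘ γ) 0 t ≤ g z - g v := by
    rintro t ⟨⟨ht0, ht1⟩, htne⟩
    have htpos : 0 < t := lt_of_le_of_ne ht0 (Ne.symm htne)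
    have hcv := hg.2 hv hz (by linarith : (0:ℝ) ≤ 1 - t) ht0 (by ring)
    have hγt : γ t = (1 - t) • v + t • z := by
      simp only [hγdef, smul_sub, sub_smul, one_smul]
      abel
    have hφt : (g ∘ γ) t ≤ (1 - t) * g v + t * g z := by
      simp only [Function.comp_apply, hγt]
      simpa [smul_eq_mul] using hcv
    have hφ0 : (g ∘ γ) 0 = g v := by simp [hγ0]
    rw [slope_def_field]
    rw [hφ0, sub_zero, div_le_iff₀ htpos]
    nlinarith
  have hlim : Filter.Tendsto (slope (g ∘ γ) 0) (nhdsWithin 0 (Icc (0:ℝ) 1 \ {0}))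
      (nhds ⟪x, z - v⟫) := hasDerivWithinAt_iff_tendsto_slope.mp hcomp
  have hsetEq : Icc (0:ℝ) 1 \ {0} = Ioc (0:ℝ) 1 := by
    ext t; simp [Icc, Ioc, and_comm, lt_iff_le_and_ne, eq_comm]
    tauto
  have hne2 : (nhdsWithin (0:ℝ) (Icc (0:ℝ) 1 \ {0})).NeBot := by
    rw [hsetEq]
    exact left_nhdsWithin_Ioc_neBot (by norm_num : (0:ℝ) < 1)
  have hle : ⟪x, z - v⟫ ≤ g z - g v :=
    le_of_tendsto hlim (Filter.eventually_iff_exists_mem.mpr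
      ⟨Icc (0:ℝ) 1 \ {0}, self_mem_nhdsWithin, hslope⟩)
  linarith

/-- Primal solution recovery: if `y*` solves the dual optimality
condition, then `x* := ∇f*(-Dᵀy*)` globally minimizes `f(x) + ψ(Dx)`. -/
theorem stmt_16 {p n : ℕ}
    (f : Euc p → ℝ) (ψ : Euc n → ℝ)
    (Df : Set (Euc p)) (Dψ : Set (Euc n))
    (fs : Euc p → ℝ) (Dfs : Set (Euc p))
    (ψs : Euc n → ℝ) (Dψs : Set (Euc n))
    (D : Euc p →L[ℝ] Euc n)
    (ystar : Euc n) (xstar : Euc p)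
    -- `f` is proper, closed, convex
    (hf_proper : Df.Nonempty)
    (hf_convex : ConvexOn ℝ Df f)
    (hf_closed : ClosedOn f Df)
    -- `ψ` is proper, closed, convex
    (hψ_proper : Dψ.Nonempty)
    (hψ_convex : ConvexOn ℝ Dψ ψ)
    (hψ_closed : ClosedOn ψ Dψ)
    -- `fs` is the Fenchel conjugate of `f`, with effective domain `Dfs`
    (hfs_dom : ∀ v : Euc p, v ∈ Dfs ↔ BddAbove {r : ℝ | ∃ u ∈ Df, r = ⟪v, u⟫ - f u})
    (hfs : ∀ v ∈ Dfs, IsLUB {r : ℝ | ∃ u ∈ Df, r = ⟪v, u⟫ - f u} (fs v))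
    -- `ψs` is the Fenchel conjugate of `ψ`, with effective domain `Dψs`
    (hψs_dom : ∀ v : Euc n, v ∈ Dψs ↔ BddAbove {r : ℝ | ∃ u ∈ Dψ, r = ⟪v, u⟫ - ψ u})
    (hψs : ∀ v ∈ Dψs, IsLUB {r : ℝ | ∃ u ∈ Dψ, r = ⟪v, u⟫ - ψ u} (ψs v))
    -- `f*` is differentiable at `-Dᵀy*` with gradient `x* = ∇f*(-Dᵀy*)`
    (hmem : -(ContinuousLinearMap.adjoint D ystar) ∈ Dfs)
    (hdiff : HasGradientWithinAt fs xstar Dfs (-(ContinuousLinearMap.adjoint D ystar)))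
    -- `0 ∈ -D∇f*(-Dᵀy*) + ∂ψ*(y*)`, i.e. `D x* ∈ ∂ψ*(y*)`
    (hopt : IsSubgradient ψs Dψs (D xstar) ystar) :
    -- `x*` is a global minimizer of `x ↦ f(x) + ψ(Dx)`
    xstar ∈ Df ∧ D xstar ∈ Dψ ∧
    ∀ u ∈ Df, D u ∈ Dψ → f xstar + ψ (D xstar) ≤ f u + ψ (D u) := by
  set v : Euc p := -(ContinuousLinearMap.adjoint D ystar) with hvdef
  have hfs_cvx : ConvexOn ℝ Dfs fs := conj_convexOn hfs_dom hfs
  have hxsub : IsSubgradient fs Dfs xstar v := grad_subgrad hfs_cvx hmem hdiff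
  obtain ⟨hxDf, hxeq⟩ := subgrad_biconj hf_proper hf_convex hf_closed hfs_dom hfs hxsub
  obtain ⟨hDxDψ, hψeq⟩ := subgrad_biconj hψ_proper hψ_convex hψ_closed hψs_dom hψs hopt
  have hadj : ∀ u : Euc p, ⟪v, u⟫ = -⟪ystar, D u⟫ := by
    intro u
    rw [hvdef, inner_neg_left, ContinuousLinearMap.adjoint_inner_left]
  refine ⟨hxDf, hDxDψ, fun u hu hDu => ?_⟩
  have h1 : ⟪v, u⟫ - f u ≤ fs v := fenchel_young hfs hmem hu
  have h2 : ⟪ystar, D u⟫ - ψ (D u) ≤ ψs ystar := fenchel_young hψs hopt.1 hDu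
  have e1 := hadj u
  have e2 := hadj xstar
  rw [e2] at hxeq
  rw [e1] at h1
  linarith

end
end

section
/- Let f : ℝ^p → ℝ be three-times continuously differentiable, convex, (M_f, κ)-generalized self-concordant with κ ∈ (0, 3] and M_f ≥ 0, and μ_f-strongly convex with μ_f > 0 (so ∇²f(x) ⪰ μ_f·I for all x ∈ dom f). Then f is M̂_f-self-concordant with M̂_f := M_f / (√μ_f)^{3−κ}, i.e. |∇³f(x)[u,u,u]| ≤ M̂_f·⟨∇²f(x)u, u⟩^{3/2} for all x ∈ dom f and u ∈ ℝ^p. -/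
/-!
Strong convexity gives `μ ‖u‖² ≤ ⟨∇²f(x)u, u⟩`, i.e. `‖u‖ ≤ ‖u‖ₓ / √μ`. Taking `v = u` in the
generalized self-concordance inequality and bounding its factor `‖u‖^{3-κ}` (a nondecreasing
power since `κ ≤ 3`) this way turns the right-hand side into `M_f ‖u‖ₓ³ / (√μ)^{3-κ}`.
-/

open Set
open scoped RealInnerProductSpace

noncomputable section

theorem le_sqrt_div_sqrt_of_mul_sq_le {μ n s : ℝ} (hμ : 0 < μ) (hn : 0 ≤ n)
    (hns : μ * n ^ 2 ≤ s) : n ≤ √s / √μ := by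
  rw [le_div_iff₀ (Real.sqrt_pos.mpr hμ)]
  calc n * √μ = √(μ * n ^ 2) := by rw [Real.sqrt_mul hμ.le, Real.sqrt_sq hn, mul_comm]
    _ ≤ √s := Real.sqrt_le_sqrt hns

theorem mul_mul_sqrt_rpow_mul_rpow_le {M κ μ s n : ℝ} (hM : 0 ≤ M) (hκ : κ ≤ 3) (hμ : 0 < μ)
    (hn : 0 ≤ n) (hns : μ * n ^ 2 ≤ s) :
    M * s * √s ^ (κ - 2) * n ^ ((3 : ℝ) - κ) ≤ M / √μ ^ ((3 : ℝ) - κ) * s ^ ((3 : ℝ) / 2) := by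
  have hs : 0 ≤ s := le_trans (by positivity) hns
  calc M * s * √s ^ (κ - 2) * n ^ ((3 : ℝ) - κ)
        ≤ M * s * √s ^ (κ - 2) * (√s / √μ) ^ ((3 : ℝ) - κ) := by
          gcongr
          exact le_sqrt_div_sqrt_of_mul_sq_le hμ hn hns
    _ = M / √μ ^ ((3 : ℝ) - κ) * (s * √s ^ (κ - 2 + (3 - κ))) := by
          rw [Real.div_rpow (Real.sqrt_nonneg s) (Real.sqrt_nonneg μ),
            Real.rpow_add' (Real.sqrt_nonneg s) (by norm_num)]
          ring
    _ = M / √μ ^ ((3 : ℝ) - κ) * s ^ ((3 : ℝ) / 2) := by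
          have hs32 : s * √s = s ^ ((3 : ℝ) / 2) := by
            rw [Real.sqrt_eq_rpow, ← Real.rpow_one_add' hs (by norm_num)]
            norm_num
          norm_num [hs32]

theorem stmt_19_general {p : ℕ}
    (f'' : Euc p → Euc p →L[ℝ] Euc p)
    (f''' : Euc p → Euc p →L[ℝ] Euc p →L[ℝ] Euc p)
    (Mf κ μf : ℝ)
    -- `f` is `(Mf, κ)`-generalized self-concordant with `κ ∈ (0,3]`, `Mf ≥ 0`
    (hMf : 0 ≤ Mf)
    (hκ : κ ∈ Ioc (0 : ℝ) 3)
    (hgsc : ∀ x u v : Euc p,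
      |⟪f''' x u v, v⟫| ≤
        Mf * ⟪f'' x v, v⟫ * Real.sqrt ⟪f'' x u, u⟫ ^ (κ - 2) * ‖u‖ ^ ((3 : ℝ) - κ))
    -- `f` is `μf`-strongly convex, so that `∇²f(x) ⪰ μf·I`
    (hμf : 0 < μf)
    (hf_hess_lb : ∀ x, ∀ u : Euc p, μf * ‖u‖ ^ 2 ≤ ⟪f'' x u, u⟫) :
    -- `f` is `M̂f`-self-concordant with `M̂f = Mf/(√μf)^{3-κ}`
    ∀ x u : Euc p,
      |⟪f''' x u u, u⟫| ≤
        (Mf / Real.sqrt μf ^ ((3 : ℝ) - κ)) * ⟪f'' x u, u⟫ ^ ((3 : ℝ) / 2) := fun x u =>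
  (hgsc x u u).trans
    (mul_mul_sqrt_rpow_mul_rpow_le hMf hκ.2 hμf (norm_nonneg u) (hf_hess_lb x u))

/-- Proposition: a generalized self-concordant and strongly convex
function is self-concordant with constant `M_f/(√μ_f)^{3-κ}`. -/
theorem stmt_19 {p : ℕ}
    (f : Euc p → ℝ)
    (f' : Euc p → Euc p)
    (f'' : Euc p → Euc p →L[ℝ] Euc p)
    (f''' : Euc p → Euc p →L[ℝ] Euc p →L[ℝ] Euc p)
    (Mf κ μf : ℝ)
    -- `f` is three times continuously differentiable and convex
    (hf_smooth : ContDiff ℝ 3 f)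
    (hf_convex : ConvexOn ℝ univ f)
    (hf_grad : ∀ x, HasGradientAt f (f' x) x)
    (hf_hess : ∀ x, HasFDerivAt f' (f'' x) x)
    (hf_third : ∀ x, HasFDerivAt f'' (f''' x) x)
    -- `f` is `(Mf, κ)`-generalized self-concordant with `κ ∈ (0,3]`, `Mf ≥ 0`
    (hMf : 0 ≤ Mf)
    (hκ : κ ∈ Ioc (0 : ℝ) 3)
    (hgsc : ∀ x u v : Euc p,
      |⟪f''' x u v, v⟫| ≤
        Mf * ⟪f'' x v, v⟫ * Real.sqrt ⟪f'' x u, u⟫ ^ (κ - 2) * ‖u‖ ^ ((3 : ℝ) - κ))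
    -- `f` is `μf`-strongly convex, so that `∇²f(x) ⪰ μf·I`
    (hμf : 0 < μf)
    (hf_strong : StrongConvexOn univ μf f)
    (hf_hess_lb : ∀ x, ∀ u : Euc p, μf * ‖u‖ ^ 2 ≤ ⟪f'' x u, u⟫) :
    -- `f` is `M̂f`-self-concordant with `M̂f = Mf/(√μf)^{3-κ}`
    ∀ x u : Euc p,
      |⟪f''' x u u, u⟫| ≤
        (Mf / Real.sqrt μf ^ ((3 : ℝ) - κ)) * ⟪f'' x u, u⟫ ^ ((3 : ℝ) / 2) :=
  stmt_19_general f'' f''' Mf κ μf hMf hκ hgsc hμf hf_hess_lb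

end
end
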